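/- arXiv:1807.10455 — 9 statements merged into one kernel-verified Lean document; each statement's English description precedes it below -/
import Mathlib

section
/- Let f : ℝ^d → ℝ be convex lower semicontinuous with Fenchel conjugate f*, let 𝒳 ⊆ ℝ^d be compact convex, and let g(x,y) = ⟨x,y⟩ − f*(y). Fix positive weights α_1, …, α_T with A_T = Σ_{t=1}^T α_t, and arbitrary sequences x_1, …, x_T ∈ 𝒳 and y_1, …, y_T ∈ ℝ^d. Define the weighted regrets Regret^y = Σ_{t=1}^T α_t ℓ_t(y_t) − inf_y Σ_{t=1}^T α_t ℓ_t(y) with ℓ_t(y) = f*(y) − ⟨x_t, y⟩, and Regret^x = Σ_{t=1}^T α_t h_t(x_t) − min_{x ∈ 𝒳} Σ_{t=1}^T α_t h_t(x) with h_t(x) = ⟨x, y_t⟩ − f*(y_t). Then the weighted averages x̄_T = (1/A_T) Σ_{t=1}^T α_t x_t and ȳ_T = (1/A_T) Σ_{t=1}^T α_t y_t form an ε-equilibrium of g with ε = (Regret^x + Regret^y)/A_T; in particular sup_y g(x̄_T, y) − inf_{x ∈ 𝒳} g(x, ȳ_T) ≤ (Regret^x + Regret^y)/A_T. -/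
open scoped RealInnerProductSpace
open Finset

/-!
Scaled by `A = ∑ α_t`, the payoff `g(x̄, z)` is minus the cumulative loss `∑ α_t ℓ_t(z)` of the
`y`-player, so `A · sup_z g(x̄, z) ≤ -inf_z ∑ α_t ℓ_t(z)`. On the other side, `f*` is convex as a
supremum of affine functions, so by Jensen `A · g(z, ȳ) ≥ ∑ α_t h_t(z)` and
`A · inf_{z ∈ 𝒳} g(z, ȳ) ≥ min_{z ∈ 𝒳} ∑ α_t h_t(z)`. Since `h_t(x_t) = -ℓ_t(y_t)`, the realised
losses cancel in `Regret^x + Regret^y`, which is exactly the difference of the two bounds.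
-/

variable {ι E : Type*} [NormedAddCommGroup E] [InnerProductSpace ℝ E]

theorem convexOn_univ_of_isLUB_inner_sub {f φ : E → ℝ}
    (hφ : ∀ y, IsLUB (Set.range fun x => ⟪x, y⟫ - f x) (φ y)) : ConvexOn ℝ Set.univ φ := by
  refine ⟨convex_univ, fun y₁ _ y₂ _ a b ha hb hab => (hφ _).2 ?_⟩
  rintro _ ⟨x, rfl⟩
  calc ⟪x, a • y₁ + b • y₂⟫ - f x = a * (⟪x, y₁⟫ - f x) + b * (⟪x, y₂⟫ - f x) := by
        rw [inner_add_right, real_inner_smul_right, real_inner_smul_right]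
        linear_combination f x * hab
    _ ≤ a • φ y₁ + b • φ y₂ := by
        simp only [smul_eq_mul]
        gcongr
        exacts [(hφ y₁).1 ⟨x, rfl⟩, (hφ y₂).1 ⟨x, rfl⟩]

namespace Finset

theorem sum_smul_centerMass {M : Type*} [AddCommGroup M] [Module ℝ M] {s : Finset ι}
    {w : ι → ℝ} (hw : ∑ i ∈ s, w i ≠ 0) (z : ι → M) :
    (∑ i ∈ s, w i) • s.centerMass w z = ∑ i ∈ s, w i • z i := by
  rw [centerMass, smul_inv_smul₀ hw]

theorem sum_mul_inner_centerMass_left {s : Finset ι} {w : ι → ℝ} (hw : ∑ i ∈ s, w i ≠ 0)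
    (x : ι → E) (z : E) :
    (∑ i ∈ s, w i) * ⟪s.centerMass w x, z⟫ = ∑ i ∈ s, w i * ⟪x i, z⟫ := by
  rw [← real_inner_smul_left, sum_smul_centerMass hw, sum_inner]
  simp_rw [real_inner_smul_left]

theorem sum_mul_inner_centerMass_right {s : Finset ι} {w : ι → ℝ} (hw : ∑ i ∈ s, w i ≠ 0)
    (y : ι → E) (z : E) :
    (∑ i ∈ s, w i) * ⟪z, s.centerMass w y⟫ = ∑ i ∈ s, w i * ⟪z, y i⟫ := by
  rw [← real_inner_smul_right, sum_smul_centerMass hw, inner_sum]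
  simp_rw [real_inner_smul_right]

end Finset

variable {s : Finset ι} {α : ι → ℝ} {φ : E → ℝ} {L : ℝ}

theorem IsLUB.sum_mul_le_neg_of_isGLB {x : ι → E} {S : ℝ} (hpos : 0 < ∑ t ∈ s, α t)
    (hS : IsLUB (Set.range fun z => ⟪s.centerMass α x, z⟫ - φ z) S)
    (hL : IsGLB (Set.range fun z => ∑ t ∈ s, α t * (φ z - ⟪x t, z⟫)) L) :
    (∑ t ∈ s, α t) * S ≤ -L := by
  rw [← le_div_iff₀' hpos]
  refine hS.2 ?_
  rintro _ ⟨z, rfl⟩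
  have hLz := hL.1 ⟨z, rfl⟩
  simp only [mul_sub, sum_sub_distrib, ← sum_mul] at hLz
  rw [le_div_iff₀' hpos, mul_sub, sum_mul_inner_centerMass_left hpos.ne']
  linarith

theorem IsGLB.le_sum_mul_of_isGLB (hφ : ConvexOn ℝ Set.univ φ) {X : Set E} {y : ι → E} {I : ℝ}
    (hα : ∀ t ∈ s, 0 ≤ α t) (hpos : 0 < ∑ t ∈ s, α t)
    (hI : IsGLB ((fun z => ⟪z, s.centerMass α y⟫ - φ (s.centerMass α y)) '' X) I)
    (hL : IsGLB ((fun z => ∑ t ∈ s, α t * (⟪z, y t⟫ - φ (y t))) '' X) L) :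
    L ≤ (∑ t ∈ s, α t) * I := by
  have hjensen : (∑ t ∈ s, α t) * φ (s.centerMass α y) ≤ ∑ t ∈ s, α t * φ (y t) := by
    have h := mul_le_mul_of_nonneg_left
      (hφ.map_centerMass_le (p := y) hα hpos fun _ _ => Set.mem_univ _) hpos.le
    rwa [← smul_eq_mul (a := ∑ t ∈ s, α t) (b := s.centerMass α _),
      sum_smul_centerMass hpos.ne'] at h
  rw [← div_le_iff₀' hpos]
  refine hI.2 ?_
  rintro _ ⟨z, hz, rfl⟩
  have hLz := hL.1 ⟨z, hz, rfl⟩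
  simp only [mul_sub, sum_sub_distrib] at hLz
  rw [div_le_iff₀' hpos, mul_sub, sum_mul_inner_centerMass_right hpos.ne']
  linarith

theorem weighted_regret_to_equilibrium_general {d : ℕ}
    (f fstar : EuclideanSpace ℝ (Fin d) → ℝ)
    (X : Set (EuclideanSpace ℝ (Fin d)))
    (hfstar : ∀ y, IsLUB (Set.range fun x => ⟪x, y⟫ - f x) (fstar y))
    (g : EuclideanSpace ℝ (Fin d) → EuclideanSpace ℝ (Fin d) → ℝ)
    (hg : ∀ x y, g x y = ⟪x, y⟫ - fstar y)
    (T : ℕ) (hT : 1 ≤ T)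
    (α : ℕ → ℝ) (hα : ∀ t ∈ Icc 1 T, 0 < α t)
    (A : ℝ) (hA : A = ∑ t ∈ Icc 1 T, α t)
    (x y : ℕ → EuclideanSpace ℝ (Fin d))
    -- Regret^y = Σ α_t ℓ_t(y_t) - inf_y Σ α_t ℓ_t(y), where ℓ_t(y) = f*(y) - ⟪x_t, y⟫
    (Iy : ℝ)
    (hIy : IsGLB (Set.range fun z => ∑ t ∈ Icc 1 T, α t * (fstar z - ⟪x t, z⟫)) Iy)
    (Ry : ℝ)
    (hRy : Ry = (∑ t ∈ Icc 1 T, α t * (fstar (y t) - ⟪x t, y t⟫)) - Iy)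
    -- Regret^x = Σ α_t h_t(x_t) - min_{x ∈ 𝒳} Σ α_t h_t(x), where h_t(x) = ⟪x, y_t⟫ - f*(y_t)
    (Ix : ℝ)
    (hIx : IsGLB ((fun z => ∑ t ∈ Icc 1 T, α t * (⟪z, y t⟫ - fstar (y t))) '' X) Ix)
    (Rx : ℝ)
    (hRx : Rx = (∑ t ∈ Icc 1 T, α t * (⟪x t, y t⟫ - fstar (y t))) - Ix)
    -- the weighted averages
    (xbar ybar : EuclideanSpace ℝ (Fin d))
    (hxbar : xbar = A⁻¹ • ∑ t ∈ Icc 1 T, α t • x t)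
    (hybar : ybar = A⁻¹ • ∑ t ∈ Icc 1 T, α t • y t)
    -- S = sup_y g(x̄_T, y), I = inf_{x ∈ 𝒳} g(x, ȳ_T)
    (S I : ℝ)
    (hS : IsLUB (Set.range fun z => g xbar z) S)
    (hI : IsGLB ((fun z => g z ybar) '' X) I) :
    S - I ≤ (Rx + Ry) / A := by
  obtain rfl : g = fun x y => ⟪x, y⟫ - fstar y := funext₂ hg
  have hpos : 0 < ∑ t ∈ Icc 1 T, α t := sum_pos hα ⟨1, mem_Icc.2 ⟨le_rfl, hT⟩⟩
  subst hA hxbar hybar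
  have hsup := hS.sum_mul_le_neg_of_isGLB hpos hIy
  have hinf := hI.le_sum_mul_of_isGLB (convexOn_univ_of_isLUB_inner_sub hfstar)
    (fun t ht => (hα t ht).le) hpos hIx
  have hcancel : ∑ t ∈ Icc 1 T, α t * (⟪x t, y t⟫ - fstar (y t))
      + ∑ t ∈ Icc 1 T, α t * (fstar (y t) - ⟪x t, y t⟫) = 0 := by
    rw [← sum_add_distrib]
    exact sum_eq_zero fun t _ => by ring
  rw [le_div_iff₀' hpos]
  linarith

/-- No-regret dynamics produce an approximate equilibrium of the Fenchel game:
the weighted averages `(x̄_T, ȳ_T)` satisfy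
`sup_y g(x̄_T, y) - inf_{x ∈ 𝒳} g(x, ȳ_T) ≤ (Regret^x + Regret^y) / A_T`. -/
theorem weighted_regret_to_equilibrium {d : ℕ}
    (f fstar : EuclideanSpace ℝ (Fin d) → ℝ)
    (X : Set (EuclideanSpace ℝ (Fin d)))
    (hconv : ConvexOn ℝ Set.univ f)
    (hlsc : LowerSemicontinuous f)
    (hXcomp : IsCompact X) (hXconv : Convex ℝ X)
    (hfstar : ∀ y, IsLUB (Set.range fun x => ⟪x, y⟫ - f x) (fstar y))
    (g : EuclideanSpace ℝ (Fin d) → EuclideanSpace ℝ (Fin d) → ℝ)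
    (hg : ∀ x y, g x y = ⟪x, y⟫ - fstar y)
    (T : ℕ) (hT : 1 ≤ T)
    (α : ℕ → ℝ) (hα : ∀ t ∈ Icc 1 T, 0 < α t)
    (A : ℝ) (hA : A = ∑ t ∈ Icc 1 T, α t)
    (x y : ℕ → EuclideanSpace ℝ (Fin d))
    (hxX : ∀ t ∈ Icc 1 T, x t ∈ X)
    -- Regret^y = Σ α_t ℓ_t(y_t) - inf_y Σ α_t ℓ_t(y), where ℓ_t(y) = f*(y) - ⟪x_t, y⟫
    (Iy : ℝ)
    (hIy : IsGLB (Set.range fun z => ∑ t ∈ Icc 1 T, α t * (fstar z - ⟪x t, z⟫)) Iy)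
    (Ry : ℝ)
    (hRy : Ry = (∑ t ∈ Icc 1 T, α t * (fstar (y t) - ⟪x t, y t⟫)) - Iy)
    -- Regret^x = Σ α_t h_t(x_t) - min_{x ∈ 𝒳} Σ α_t h_t(x), where h_t(x) = ⟪x, y_t⟫ - f*(y_t)
    (Ix : ℝ)
    (hIx : IsGLB ((fun z => ∑ t ∈ Icc 1 T, α t * (⟪z, y t⟫ - fstar (y t))) '' X) Ix)
    (Rx : ℝ)
    (hRx : Rx = (∑ t ∈ Icc 1 T, α t * (⟪x t, y t⟫ - fstar (y t))) - Ix)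
    -- the weighted averages
    (xbar ybar : EuclideanSpace ℝ (Fin d))
    (hxbar : xbar = A⁻¹ • ∑ t ∈ Icc 1 T, α t • x t)
    (hybar : ybar = A⁻¹ • ∑ t ∈ Icc 1 T, α t • y t)
    -- S = sup_y g(x̄_T, y), I = inf_{x ∈ 𝒳} g(x, ȳ_T)
    (S I : ℝ)
    (hS : IsLUB (Set.range fun z => g xbar z) S)
    (hI : IsGLB ((fun z => g z ybar) '' X) I) :
    S - I ≤ (Rx + Ry) / A :=
  weighted_regret_to_equilibrium_general f fstar X hfstar g hg T hT α hα A hA x y Iy hIy Ry hRy Ix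
    hIx Rx hRx xbar ybar hxbar hybar S I hS hI
end

section
/- Let ℓ_0, ℓ_1, …, ℓ_T : ℝ^m → ℝ be arbitrary functions and α_1, …, α_T > 0. Define δ_t(y) = α_t(ℓ_t(y) − ℓ_{t−1}(y)). Suppose for each t = 1, …, T the point ỹ_t minimizes y ↦ α_t ℓ_{t−1}(y) + Σ_{s=1}^{t−1} α_s ℓ_s(y) over ℝ^m (the Optimistic-FTL iterate) and for each t the point ŷ_{t+1} minimizes y ↦ Σ_{s=1}^{t} α_s ℓ_s(y) over ℝ^m (the FTL leader). Then the weighted regret of the Optimistic-FTL iterates satisfies Σ_{t=1}^T α_t ℓ_t(ỹ_t) − min_y Σ_{t=1}^T α_t ℓ_t(y) ≤ Σ_{t=1}^T (δ_t(ỹ_t) − δ_t(ŷ_{t+1})). -/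
/-!
Write `L t = ∑_{s ≤ t} f s` for the cumulative loss and `δ t = f t - g t` for the error of the
guess `g t`. Comparing the optimistic iterate with the next leader `ŷ_{t+1}`, and the previous
leader `ŷ_t` with the optimistic iterate, gives
`g t (ỹ_t) + δ t (ŷ_{t+1}) ≤ L t (ŷ_{t+1}) - L (t-1) (ŷ_t)`.
The right-hand side telescopes to `L T (ŷ_{T+1})`, and `f t = g t + δ t` turns the sum of
these inequalities into the regret bound.
-/

open Finset

theorem Finset.sum_Icc_one_sub_pred {M : Type*} [AddCommGroup M] (F : ℕ → M) (T : ℕ) :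
    ∑ t ∈ Icc 1 T, (F t - F (t - 1)) = F T - F 0 := by
  induction T with
  | zero => simp
  | succ T ih => rw [sum_Icc_succ_top (by omega), ih, Nat.add_sub_cancel]; abel

theorem Finset.sum_Icc_one_eq_sum_Icc_pred_add {M : Type*} [AddCommMonoid M] (φ : ℕ → M)
    {t : ℕ} (ht : 1 ≤ t) :
    ∑ s ∈ Icc 1 t, φ s = ∑ s ∈ Icc 1 (t - 1), φ s + φ t := by
  obtain ⟨t, rfl⟩ := Nat.exists_eq_add_of_le' ht
  rw [sum_Icc_succ_top (by omega), Nat.add_sub_cancel]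

section OptimisticFTL

variable {E M : Type*} [AddCommGroup M] [PartialOrder M] [IsOrderedAddMonoid M]
  (f g : ℕ → E → M) {ytil yhat : ℕ → E}

theorem optimisticFTL_step_le {t : ℕ} (ht : 1 ≤ t)
    (hytil : g t (ytil t) + ∑ s ∈ Icc 1 (t - 1), f s (ytil t)
      ≤ g t (yhat (t + 1)) + ∑ s ∈ Icc 1 (t - 1), f s (yhat (t + 1)))
    (hyhat : ∑ s ∈ Icc 1 (t - 1), f s (yhat t) ≤ ∑ s ∈ Icc 1 (t - 1), f s (ytil t)) :
    g t (ytil t) + (f t (yhat (t + 1)) - g t (yhat (t + 1)))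
      ≤ ∑ s ∈ Icc 1 t, f s (yhat (t + 1)) - ∑ s ∈ Icc 1 (t - 1), f s (yhat t) := by
  rw [sum_Icc_one_eq_sum_Icc_pred_add _ ht, le_sub_iff_add_le]
  calc g t (ytil t) + (f t (yhat (t + 1)) - g t (yhat (t + 1)))
          + ∑ s ∈ Icc 1 (t - 1), f s (yhat t)
      ≤ g t (ytil t) + ∑ s ∈ Icc 1 (t - 1), f s (ytil t)
          + (f t (yhat (t + 1)) - g t (yhat (t + 1))) := by
        rw [add_right_comm]; gcongr
    _ ≤ g t (yhat (t + 1)) + ∑ s ∈ Icc 1 (t - 1), f s (yhat (t + 1))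
          + (f t (yhat (t + 1)) - g t (yhat (t + 1))) := by gcongr
    _ = ∑ s ∈ Icc 1 (t - 1), f s (yhat (t + 1)) + f t (yhat (t + 1)) := by abel

theorem sum_optimisticFTL_guess_add_error_le (T : ℕ)
    (hytil : ∀ t ∈ Icc 1 T, ∀ y,
      g t (ytil t) + ∑ s ∈ Icc 1 (t - 1), f s (ytil t) ≤ g t y + ∑ s ∈ Icc 1 (t - 1), f s y)
    (hyhat : ∀ t < T, ∀ y, ∑ s ∈ Icc 1 t, f s (yhat (t + 1)) ≤ ∑ s ∈ Icc 1 t, f s y) :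
    ∑ t ∈ Icc 1 T, (g t (ytil t) + (f t (yhat (t + 1)) - g t (yhat (t + 1))))
      ≤ ∑ s ∈ Icc 1 T, f s (yhat (T + 1)) := by
  let L : ℕ → M := fun t ↦ ∑ s ∈ Icc 1 t, f s (yhat (t + 1))
  calc _ ≤ ∑ t ∈ Icc 1 T, (L t - L (t - 1)) := by
        refine sum_le_sum fun t ht ↦ ?_
        have ht₁ : 1 ≤ t := (mem_Icc.1 ht).1
        have hpred : L (t - 1) = ∑ s ∈ Icc 1 (t - 1), f s (yhat t) := by
          simp only [L, Nat.sub_add_cancel ht₁]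
        rw [hpred]
        refine optimisticFTL_step_le f g ht₁ (hytil t ht _) ?_
        simpa only [Nat.sub_add_cancel ht₁] using hyhat (t - 1) (by grind) (ytil t)
    _ = L T := by rw [sum_Icc_one_sub_pred L T]; simp [L]

theorem optimisticFTL_regret_le (T : ℕ)
    (hytil : ∀ t ∈ Icc 1 T, ∀ y,
      g t (ytil t) + ∑ s ∈ Icc 1 (t - 1), f s (ytil t) ≤ g t y + ∑ s ∈ Icc 1 (t - 1), f s y)
    (hyhat : ∀ t < T, ∀ y, ∑ s ∈ Icc 1 t, f s (yhat (t + 1)) ≤ ∑ s ∈ Icc 1 t, f s y) :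
    ∑ t ∈ Icc 1 T, f t (ytil t) - ∑ t ∈ Icc 1 T, f t (yhat (T + 1))
      ≤ ∑ t ∈ Icc 1 T,
          ((f t (ytil t) - g t (ytil t)) - (f t (yhat (t + 1)) - g t (yhat (t + 1)))) := by
  rw [sub_le_iff_le_add, sum_sub_distrib]
  calc ∑ t ∈ Icc 1 T, f t (ytil t)
      = (∑ t ∈ Icc 1 T, (f t (ytil t) - g t (ytil t))
            - ∑ t ∈ Icc 1 T, (f t (yhat (t + 1)) - g t (yhat (t + 1))))
          + ∑ t ∈ Icc 1 T, (g t (ytil t) + (f t (yhat (t + 1)) - g t (yhat (t + 1)))) := by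
        simp only [sum_add_distrib, sum_sub_distrib]; abel
    _ ≤ _ := add_le_add le_rfl (sum_optimisticFTL_guess_add_error_le f g T hytil hyhat)

end OptimisticFTL

theorem optimistic_ftl_generic_regret_general {m : ℕ}
    (T : ℕ)
    (ℓ : ℕ → EuclideanSpace ℝ (Fin m) → ℝ)
    (α : ℕ → ℝ)
    (δ : ℕ → EuclideanSpace ℝ (Fin m) → ℝ)
    (hδ : ∀ t y, δ t y = α t * (ℓ t y - ℓ (t - 1) y))
    (ytil yhat : ℕ → EuclideanSpace ℝ (Fin m))
    -- ỹ_t minimizes y ↦ α_t ℓ_{t-1}(y) + Σ_{s=1}^{t-1} α_s ℓ_s(y) over ℝ^m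
    (hytil : ∀ t ∈ Icc 1 T, ∀ y,
      α t * ℓ (t - 1) (ytil t) + ∑ s ∈ Icc 1 (t - 1), α s * ℓ s (ytil t)
        ≤ α t * ℓ (t - 1) y + ∑ s ∈ Icc 1 (t - 1), α s * ℓ s y)
    -- ŷ_{t+1} minimizes y ↦ Σ_{s=1}^{t} α_s ℓ_s(y) over ℝ^m
    (hyhat : ∀ t ∈ Icc 1 T, ∀ y,
      ∑ s ∈ Icc 1 t, α s * ℓ s (yhat (t + 1)) ≤ ∑ s ∈ Icc 1 t, α s * ℓ s y) :
    (∑ t ∈ Icc 1 T, α t * ℓ t (ytil t)) - (∑ t ∈ Icc 1 T, α t * ℓ t (yhat (T + 1)))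
      ≤ ∑ t ∈ Icc 1 T, (δ t (ytil t) - δ t (yhat (t + 1))) := by
  have hleader : ∀ t < T, ∀ y,
      ∑ s ∈ Icc 1 t, α s * ℓ s (yhat (t + 1)) ≤ ∑ s ∈ Icc 1 t, α s * ℓ s y := by
    intro t ht y
    rcases Nat.eq_zero_or_pos t with rfl | ht₀
    · simp
    · exact hyhat t (mem_Icc.2 ⟨ht₀, ht.le⟩) y
  simpa only [hδ, mul_sub] using optimisticFTL_regret_le (fun t y ↦ α t * ℓ t y)
    (fun t y ↦ α t * ℓ (t - 1) y) T hytil hleader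

/-- Generic weighted regret bound for Optimistic-FTL (Lemma 2):
the weighted regret of the Optimistic-FTL iterates `ỹ_t` is bounded by
`Σ_{t=1}^T (δ_t(ỹ_t) - δ_t(ŷ_{t+1}))`, where `δ_t(y) = α_t (ℓ_t(y) - ℓ_{t-1}(y))`
and `ŷ_{t+1}` is the FTL leader (so `min_y Σ α_t ℓ_t(y)` is attained at `ŷ_{T+1}`). -/
theorem optimistic_ftl_generic_regret {m : ℕ}
    (T : ℕ)
    (ℓ : ℕ → EuclideanSpace ℝ (Fin m) → ℝ)
    (α : ℕ → ℝ) (hα : ∀ t ∈ Icc 1 T, 0 < α t)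
    (δ : ℕ → EuclideanSpace ℝ (Fin m) → ℝ)
    (hδ : ∀ t y, δ t y = α t * (ℓ t y - ℓ (t - 1) y))
    (ytil yhat : ℕ → EuclideanSpace ℝ (Fin m))
    -- ỹ_t minimizes y ↦ α_t ℓ_{t-1}(y) + Σ_{s=1}^{t-1} α_s ℓ_s(y) over ℝ^m
    (hytil : ∀ t ∈ Icc 1 T, ∀ y,
      α t * ℓ (t - 1) (ytil t) + ∑ s ∈ Icc 1 (t - 1), α s * ℓ s (ytil t)
        ≤ α t * ℓ (t - 1) y + ∑ s ∈ Icc 1 (t - 1), α s * ℓ s y)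
    -- ŷ_{t+1} minimizes y ↦ Σ_{s=1}^{t} α_s ℓ_s(y) over ℝ^m
    (hyhat : ∀ t ∈ Icc 1 T, ∀ y,
      ∑ s ∈ Icc 1 t, α s * ℓ s (yhat (t + 1)) ≤ ∑ s ∈ Icc 1 t, α s * ℓ s y) :
    (∑ t ∈ Icc 1 T, α t * ℓ t (ytil t)) - (∑ t ∈ Icc 1 T, α t * ℓ t (yhat (T + 1)))
      ≤ ∑ t ∈ Icc 1 T, (δ t (ytil t) - δ t (yhat (t + 1))) :=
  optimistic_ftl_generic_regret_general T ℓ α δ hδ ytil yhat hytil hyhat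
end

section
/- Let f : ℝ^d → ℝ be convex and L-smooth with respect to a norm ‖·‖ on ℝ^d (with dual norm ‖·‖_*). Let x_0, x_1, …, x_T ∈ ℝ^d be an arbitrary sequence, let α_1, …, α_T > 0 with A_t = Σ_{s=1}^t α_s, and define x̄_t = (1/A_t) Σ_{s=1}^t α_s x_s and x̃_t = (1/A_t)(α_t x_{t−1} + Σ_{s=1}^{t−1} α_s x_s). Consider the Fenchel-game losses ℓ_t(y) = f*(y) − ⟨x_t, y⟩ for t ≥ 0, and the Optimistic-FTL iterates ỹ_t = ∇f(x̃_t). Then the weighted regret satisfies Σ_{t=1}^T α_t ℓ_t(ỹ_t) − inf_y Σ_{t=1}^T α_t ℓ_t(y) ≤ L Σ_{t=1}^T (α_t²/A_t) ‖x_{t−1} − x_t‖². -/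
open scoped RealInnerProductSpace
open Finset

/-- The dual norm of a norm `N` on ℝ^d: `‖y‖_* = sup {⟪x, y⟫ : N x ≤ 1}`. -/
noncomputable def dualNorm {d : ℕ} (N : EuclideanSpace ℝ (Fin d) → ℝ)
    (y : EuclideanSpace ℝ (Fin d)) : ℝ :=
  sSup ((fun x => ⟪x, y⟫) '' {x | N x ≤ 1})

/-!
Against the Fenchel-game losses, a weighted cumulative loss `∑ β_s ℓ_s(y)` equals
`B f*(y) - ⟪S, y⟫` with `B = ∑ β_s`, `S = ∑ β_s x_s`, and the Fenchel–Young equality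
`f*(∇f z) = ⟪z, ∇f z⟫ - f z` shows that it is minimised at `∇f(S / B)`. Hence `ỹ_t = ∇f(x̃_t)`
is the optimistic-FTL iterate and `ŷ_t = ∇f(x̄_t)` the FTL leader, and the be-the-leader
induction bounds the regret by `∑ α_t ⟪x_{t-1} - x_t, ỹ_t - ŷ_t⟫`. Hölder's inequality for the
dual norm and smoothness bound each term by `L α_t N(x_{t-1} - x_t) N(x̃_t - x̄_t)`, and
`x̃_t - x̄_t = (α_t / A_t) (x_{t-1} - x_t)`.
-/

theorem ConvexOn.add_le_of_hasFDerivAt {E : Type*} [NormedAddCommGroup E] [NormedSpace ℝ E]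
    {s : Set E} {f : E → ℝ} {f' : E →L[ℝ] ℝ} {z u : E}
    (hf : ConvexOn ℝ s f) (hz : z ∈ s) (hu : u ∈ s) (hf' : HasFDerivAt f f' z) :
    f z + f' (u - z) ≤ f u := by
  have hline : HasDerivAt (f ∘ (AffineMap.lineMap z u : ℝ → E)) (f' (u - z)) 0 := by
    refine HasFDerivAt.comp_hasDerivAt (0 : ℝ) ?_ AffineMap.hasDerivAt_lineMap
    simpa using hf'
  have := (hf.comp_affineMap (AffineMap.lineMap (k := ℝ) z u)).le_slope_of_hasDerivAt
    (by simpa using hz) (by simpa using hu) zero_lt_one hline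
  simp only [slope_def_field, Function.comp_apply, AffineMap.lineMap_apply_zero,
    AffineMap.lineMap_apply_one, sub_zero, div_one] at this
  linarith

theorem Seminorm.exists_pos_mul_norm_le {E : Type*} [NormedAddCommGroup E] [NormedSpace ℝ E]
    [FiniteDimensional ℝ E] (p : Seminorm ℝ E) (hp : ∀ x, p x = 0 → x = 0) :
    ∃ c > 0, ∀ x, c * ‖x‖ ≤ p x := by
  rcases subsingleton_or_nontrivial E with hE | hE
  · exact ⟨1, one_pos, fun x => by simp [Subsingleton.elim x 0]⟩
  obtain ⟨x₀, hx₀, hmin⟩ := (isCompact_sphere (0 : E) 1).exists_isMinOn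
    (NormedSpace.sphere_nonempty.2 zero_le_one) p.convexOn.locallyLipschitz.continuous.continuousOn
  have hx₀ : x₀ ≠ 0 := ne_zero_of_mem_unit_sphere ⟨x₀, hx₀⟩
  refine ⟨p x₀, (apply_nonneg p x₀).lt_of_ne' (mt (hp x₀) hx₀), fun x => ?_⟩
  rcases eq_or_ne x 0 with rfl | hx
  · simp
  have hnorm : 0 < ‖x‖ := norm_pos_iff.2 hx
  have := hmin (show ‖x‖⁻¹ • x ∈ Metric.sphere (0 : E) 1 by
    simp [norm_smul, hnorm.ne'])
  rw [Set.mem_ofPred_eq, map_smul_eq_mul, norm_inv, norm_norm, le_inv_mul_iff₀ hnorm] at this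
  linarith

theorem sum_mul_sub_inner {E ι : Type*} [NormedAddCommGroup E] [InnerProductSpace ℝ E]
    (s : Finset ι) (β : ι → ℝ) (z : ι → E) (c : ℝ) (y : E) :
    ∑ i ∈ s, β i * (c - ⟪z i, y⟫) = (∑ i ∈ s, β i) * c - ⟪∑ i ∈ s, β i • z i, y⟫ := by
  simp only [mul_sub, sum_sub_distrib, sum_mul, sum_inner, real_inner_smul_left]

section Fenchel

variable {E : Type*} [NormedAddCommGroup E] [InnerProductSpace ℝ E] [CompleteSpace E]
  {f fstar : E → ℝ}

theorem fenchel_conj_gradient_eq (hf : ConvexOn ℝ Set.univ f)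
    (hfstar : ∀ y, IsLUB (Set.range fun x => ⟪x, y⟫ - f x) (fstar y)) {z : E}
    (hz : DifferentiableAt ℝ f z) :
    fstar (gradient f z) = ⟪z, gradient f z⟫ - f z := by
  refine le_antisymm ((hfstar _).2 ?_) ((hfstar _).1 ⟨z, rfl⟩)
  rintro _ ⟨u, rfl⟩
  have := hf.add_le_of_hasFDerivAt (u := u) trivial trivial hz.hasGradientAt.hasFDerivAt
  dsimp only
  rw [InnerProductSpace.toDual_apply_apply, inner_sub_right, real_inner_comm u,
    real_inner_comm z] at this
  linarith

theorem mul_fenchel_sub_inner_gradient_le (hf : ConvexOn ℝ Set.univ f)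
    (hfstar : ∀ y, IsLUB (Set.range fun x => ⟪x, y⟫ - f x) (fstar y)) {B : ℝ} (hB : 0 < B)
    {S : E} (hS : DifferentiableAt ℝ f (B⁻¹ • S)) (y : E) :
    B * fstar (gradient f (B⁻¹ • S)) - ⟪S, gradient f (B⁻¹ • S)⟫ ≤ B * fstar y - ⟪S, y⟫ := by
  obtain ⟨z, rfl⟩ : ∃ z, S = B • z := ⟨B⁻¹ • S, (smul_inv_smul₀ hB.ne' S).symm⟩
  rw [inv_smul_smul₀ hB.ne'] at hS ⊢
  have hy : ⟪z, y⟫ - f z ≤ fstar y := (hfstar y).1 ⟨z, rfl⟩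
  rw [real_inner_smul_left, real_inner_smul_left, fenchel_conj_gradient_eq hf hfstar hS]
  nlinarith

theorem sum_mul_fenchel_loss_gradient_le (hf : ConvexOn ℝ Set.univ f)
    (hfstar : ∀ y, IsLUB (Set.range fun x => ⟪x, y⟫ - f x) (fstar y)) {ι : Type*}
    (s : Finset ι) (β : ι → ℝ) (x : ι → E) (hβ : 0 < ∑ i ∈ s, β i)
    (hS : DifferentiableAt ℝ f ((∑ i ∈ s, β i)⁻¹ • ∑ i ∈ s, β i • x i)) (y : E) :
    let z := gradient f ((∑ i ∈ s, β i)⁻¹ • ∑ i ∈ s, β i • x i)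
    ∑ i ∈ s, β i * (fstar z - ⟪x i, z⟫) ≤ ∑ i ∈ s, β i * (fstar y - ⟪x i, y⟫) := by
  simpa only [sum_mul_sub_inner] using mul_fenchel_sub_inner_gradient_le hf hfstar hβ hS y

theorem mul_add_sum_mul_fenchel_loss_gradient_le (hf : ConvexOn ℝ Set.univ f)
    (hfstar : ∀ y, IsLUB (Set.range fun x => ⟪x, y⟫ - f x) (fstar y)) {ι : Type*}
    (β₀ : ℝ) (x₀ : E) (s : Finset ι) (β : ι → ℝ) (x : ι → E) (hβ : 0 < β₀ + ∑ i ∈ s, β i)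
    (hS : DifferentiableAt ℝ f ((β₀ + ∑ i ∈ s, β i)⁻¹ • (β₀ • x₀ + ∑ i ∈ s, β i • x i)))
    (y : E) :
    let z := gradient f ((β₀ + ∑ i ∈ s, β i)⁻¹ • (β₀ • x₀ + ∑ i ∈ s, β i • x i))
    β₀ * (fstar z - ⟪x₀, z⟫) + ∑ i ∈ s, β i * (fstar z - ⟪x i, z⟫)
      ≤ β₀ * (fstar y - ⟪x₀, y⟫) + ∑ i ∈ s, β i * (fstar y - ⟪x i, y⟫) := by
  have := mul_fenchel_sub_inner_gradient_le hf hfstar hβ hS y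
  simp only [sum_mul_sub_inner, inner_add_left, real_inner_smul_left] at this ⊢
  linarith

end Fenchel

section DualNorm

variable {d : ℕ} {p : Seminorm ℝ (EuclideanSpace ℝ (Fin d))}

theorem bddAbove_inner_seminorm_le_one (hp : ∀ x, p x = 0 → x = 0)
    (y : EuclideanSpace ℝ (Fin d)) : BddAbove ((fun x => ⟪x, y⟫) '' {x | p x ≤ 1}) := by
  obtain ⟨c, hc, hle⟩ := p.exists_pos_mul_norm_le hp
  refine ⟨c⁻¹ * ‖y‖, ?_⟩
  rintro _ ⟨x, hx, rfl⟩
  have hx : ‖x‖ ≤ c⁻¹ := by simpa using (le_inv_mul_iff₀ hc).2 ((hle x).trans hx)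
  calc ⟪x, y⟫ ≤ ‖x‖ * ‖y‖ := real_inner_le_norm x y
    _ ≤ c⁻¹ * ‖y‖ := by gcongr

theorem inner_le_mul_dualNorm (hp : ∀ x, p x = 0 → x = 0) (u y : EuclideanSpace ℝ (Fin d)) :
    ⟪u, y⟫ ≤ p u * dualNorm p y := by
  rcases eq_or_ne u 0 with rfl | hu
  · simp
  have hpu : 0 < p u := (apply_nonneg p u).lt_of_ne' (mt (hp u) hu)
  have : ⟪(p u)⁻¹ • u, y⟫ ≤ dualNorm p y := le_csSup (bddAbove_inner_seminorm_le_one hp y)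
    ⟨_, by simp [map_smul_eq_mul, hpu.ne', abs_of_pos hpu], rfl⟩
  rwa [real_inner_smul_left, inv_mul_le_iff₀ hpu] at this

theorem inner_sub_gradient_le_of_smooth (hp : ∀ x, p x = 0 → x = 0)
    {f : EuclideanSpace ℝ (Fin d) → ℝ} {L : ℝ}
    (hsmooth : ∀ u v, dualNorm p (gradient f u - gradient f v) ≤ L * p (u - v))
    (w u v : EuclideanSpace ℝ (Fin d)) :
    ⟪w, gradient f u - gradient f v⟫ ≤ L * (p w * p (u - v)) :=
  calc ⟪w, gradient f u - gradient f v⟫ ≤ p w * dualNorm p (gradient f u - gradient f v) :=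
        inner_le_mul_dualNorm hp _ _
    _ ≤ p w * (L * p (u - v)) := mul_le_mul_of_nonneg_left (hsmooth u v) (apply_nonneg _ _)
    _ = L * (p w * p (u - v)) := by ring

theorem fenchel_loss_variation_le (hp : ∀ x, p x = 0 → x = 0)
    {f fstar : EuclideanSpace ℝ (Fin d) → ℝ} {L : ℝ}
    (hsmooth : ∀ u v, dualNorm p (gradient f u - gradient f v) ≤ L * p (u - v))
    {u v a b : EuclideanSpace ℝ (Fin d)} {β B : ℝ} (hβ : 0 ≤ β) (hB : 0 ≤ B)
    (hab : a - b = (β / B) • (u - v)) :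
    β * (fstar (gradient f a) - ⟪v, gradient f a⟫ - (fstar (gradient f b) - ⟪v, gradient f b⟫)
        - (fstar (gradient f a) - ⟪u, gradient f a⟫ - (fstar (gradient f b) - ⟪u, gradient f b⟫)))
      ≤ L * (β ^ 2 / B * p (u - v) ^ 2) :=
  calc _ = β * ⟪u - v, gradient f a - gradient f b⟫ := by
        simp only [inner_sub_left, inner_sub_right]; ring
    _ ≤ β * (L * (p (u - v) * p (a - b))) :=
        mul_le_mul_of_nonneg_left (inner_sub_gradient_le_of_smooth hp hsmooth _ _ _) hβ
    _ = L * (β ^ 2 / B * p (u - v) ^ 2) := by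
        rw [hab, map_smul_eq_mul, Real.norm_eq_abs, abs_of_nonneg (div_nonneg hβ hB)]; ring

end DualNorm

section OptimisticFTL

variable {Y : Type*} (ℓ : ℕ → Y → ℝ) (α : ℕ → ℝ) (ytil yhat : ℕ → Y)

theorem optimistic_ftl_le_cumulative_loss {T : ℕ}
    (hytil : ∀ t ∈ Icc 1 T, ∀ y, α t * ℓ (t - 1) (ytil t) + ∑ s ∈ Icc 1 (t - 1), α s * ℓ s (ytil t)
      ≤ α t * ℓ (t - 1) y + ∑ s ∈ Icc 1 (t - 1), α s * ℓ s y)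
    (hyhat : ∀ t ∈ Icc 1 T, ∀ y, ∑ s ∈ Icc 1 t, α s * ℓ s (yhat t) ≤ ∑ s ∈ Icc 1 t, α s * ℓ s y)
    (y : Y) :
    ∑ t ∈ Icc 1 T, α t * (ℓ (t - 1) (ytil t) + ℓ t (yhat t) - ℓ (t - 1) (yhat t))
      ≤ ∑ t ∈ Icc 1 T, α t * ℓ t y := by
  induction T generalizing y with
  | zero => simp
  | succ n ih =>
    have hlast : n + 1 ∈ Icc 1 (n + 1) := mem_Icc.2 ⟨by omega, le_rfl⟩
    have hprev := ih (fun t ht => hytil t (Icc_subset_Icc_right n.le_succ ht))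
      (fun t ht => hyhat t (Icc_subset_Icc_right n.le_succ ht)) (ytil (n + 1))
    have hopt := hytil (n + 1) hlast (yhat (n + 1))
    have hlead := hyhat (n + 1) hlast y
    simp only [Nat.add_sub_cancel] at hopt
    rw [sum_Icc_succ_top (by omega), sum_Icc_succ_top (by omega)] at hlead ⊢
    simp only [Nat.add_sub_cancel]
    linarith

theorem optimistic_ftl_regret_le {T : ℕ}
    (hytil : ∀ t ∈ Icc 1 T, ∀ y, α t * ℓ (t - 1) (ytil t) + ∑ s ∈ Icc 1 (t - 1), α s * ℓ s (ytil t)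
      ≤ α t * ℓ (t - 1) y + ∑ s ∈ Icc 1 (t - 1), α s * ℓ s y)
    (hyhat : ∀ t ∈ Icc 1 T, ∀ y, ∑ s ∈ Icc 1 t, α s * ℓ s (yhat t) ≤ ∑ s ∈ Icc 1 t, α s * ℓ s y)
    (y : Y) :
    ∑ t ∈ Icc 1 T, α t * ℓ t (ytil t) - ∑ t ∈ Icc 1 T, α t * ℓ t y
      ≤ ∑ t ∈ Icc 1 T, α t * (ℓ t (ytil t) - ℓ t (yhat t)
          - (ℓ (t - 1) (ytil t) - ℓ (t - 1) (yhat t))) := by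
  have := optimistic_ftl_le_cumulative_loss ℓ α ytil yhat hytil hyhat y
  simp only [mul_sub, mul_add, sum_sub_distrib, sum_add_distrib] at this ⊢
  linarith

end OptimisticFTL

theorem optimistic_ftl_fenchel_regret_general {d : ℕ}
    (f fstar : EuclideanSpace ℝ (Fin d) → ℝ)
    (N : EuclideanSpace ℝ (Fin d) → ℝ)
    (hconv : ConvexOn ℝ Set.univ f)
    (hdiff : Differentiable ℝ f)
    (hfstar : ∀ y, IsLUB (Set.range fun x => ⟪x, y⟫ - f x) (fstar y))
    -- N is a norm
    (hN_add : ∀ u v, N (u + v) ≤ N u + N v)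
    (hN_smul : ∀ (a : ℝ) (u : EuclideanSpace ℝ (Fin d)), N (a • u) = |a| * N u)
    (hN_zero : ∀ u, N u = 0 → u = 0)
    -- f is L-smooth with respect to N
    (L : ℝ)
    (hsmooth : ∀ u v, dualNorm N (gradient f u - gradient f v) ≤ L * N (u - v))
    (T : ℕ)
    (x : ℕ → EuclideanSpace ℝ (Fin d))
    (α : ℕ → ℝ) (hα : ∀ t ∈ Icc 1 T, 0 < α t)
    (A : ℕ → ℝ) (hA : ∀ t, A t = ∑ s ∈ Icc 1 t, α s)
    (xtil : ℕ → EuclideanSpace ℝ (Fin d))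
    (hxtil : ∀ t ∈ Icc 1 T,
      xtil t = (A t)⁻¹ • (α t • x (t - 1) + ∑ s ∈ Icc 1 (t - 1), α s • x s))
    (ytil : ℕ → EuclideanSpace ℝ (Fin d))
    (hytil : ∀ t ∈ Icc 1 T, ytil t = gradient f (xtil t)) :
    ∀ y, (∑ t ∈ Icc 1 T, α t * (fstar (ytil t) - ⟪x t, ytil t⟫))
        - (∑ t ∈ Icc 1 T, α t * (fstar y - ⟪x t, y⟫))
      ≤ L * ∑ t ∈ Icc 1 T, (α t ^ 2 / A t) * (N (x (t - 1) - x t)) ^ 2 := by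
  intro y
  let p : Seminorm ℝ (EuclideanSpace ℝ (Fin d)) :=
    Seminorm.of N hN_add fun a u => by rw [hN_smul, Real.norm_eq_abs]
  let xbar : ℕ → EuclideanSpace ℝ (Fin d) := fun t => (A t)⁻¹ • ∑ s ∈ Icc 1 t, α s • x s
  have hApos : ∀ t ∈ Icc 1 T, 0 < A t := fun t ht => hA t ▸ sum_pos
    (fun s hs => hα s (Icc_subset_Icc_right (mem_Icc.1 ht).2 hs)) ⟨t, by grind⟩
  have hleader : ∀ t ∈ Icc 1 T, ∀ y,
      ∑ s ∈ Icc 1 t, α s * (fstar (gradient f (xbar t)) - ⟪x s, gradient f (xbar t)⟫)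
        ≤ ∑ s ∈ Icc 1 t, α s * (fstar y - ⟪x s, y⟫) := fun t ht y => by
    simpa only [xbar, hA] using sum_mul_fenchel_loss_gradient_le hconv hfstar (Icc 1 t) α x
      (hA t ▸ hApos t ht) (hdiff _) y
  have hoptimistic : ∀ t ∈ Icc 1 T, ∀ y,
      α t * (fstar (ytil t) - ⟪x (t - 1), ytil t⟫)
          + ∑ s ∈ Icc 1 (t - 1), α s * (fstar (ytil t) - ⟪x s, ytil t⟫)
        ≤ α t * (fstar y - ⟪x (t - 1), y⟫) + ∑ s ∈ Icc 1 (t - 1), α s * (fstar y - ⟪x s, y⟫) := by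
    intro t ht y
    have hAt : A t = α t + ∑ s ∈ Icc 1 (t - 1), α s := by
      obtain ⟨n, rfl⟩ : ∃ n, t = n + 1 := ⟨t - 1, by grind⟩
      rw [hA, sum_Icc_succ_top (by omega), Nat.add_sub_cancel, add_comm]
    rw [hytil t ht, hxtil t ht, hAt]
    exact mul_add_sum_mul_fenchel_loss_gradient_le hconv hfstar _ _ _ α x
      (hAt ▸ hApos t ht) (hdiff _) y
  refine (optimistic_ftl_regret_le (fun t y => fstar y - ⟪x t, y⟫) α ytil
    (fun t => gradient f (xbar t)) hoptimistic hleader y).trans ?_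
  rw [mul_sum]
  refine sum_le_sum fun t ht => ?_
  obtain ⟨n, rfl⟩ : ∃ n, t = n + 1 := ⟨t - 1, by grind⟩
  have hgap : xtil (n + 1) - xbar (n + 1) = (α (n + 1) / A (n + 1)) • (x n - x (n + 1)) := by
    simp only [hxtil _ ht, xbar, Nat.add_sub_cancel, sum_Icc_succ_top (Nat.le_add_left 1 n)]
    module
  rw [hytil _ ht]
  exact fenchel_loss_variation_le (p := p) hN_zero hsmooth (hα _ ht).le (hApos _ ht).le hgap

/-- Lemma 3: for a convex `L`-smooth function `f` (w.r.t. a norm `N` with dual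
norm `‖·‖_*`), an arbitrary sequence `x_0, …, x_T` and positive weights `α_t`, the weighted
regret of the Optimistic-FTL iterates `ỹ_t = ∇f(x̃_t)` on the Fenchel-game losses
`ℓ_t(y) = f*(y) - ⟪x_t, y⟫` is at most `L Σ_t (α_t²/A_t) N(x_{t-1} - x_t)²`. -/
theorem optimistic_ftl_fenchel_regret {d : ℕ}
    (f fstar : EuclideanSpace ℝ (Fin d) → ℝ)
    (N : EuclideanSpace ℝ (Fin d) → ℝ)
    (hconv : ConvexOn ℝ Set.univ f)
    (hdiff : Differentiable ℝ f)
    (hfstar : ∀ y, IsLUB (Set.range fun x => ⟪x, y⟫ - f x) (fstar y))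
    -- N is a norm
    (hN_add : ∀ u v, N (u + v) ≤ N u + N v)
    (hN_smul : ∀ (a : ℝ) (u : EuclideanSpace ℝ (Fin d)), N (a • u) = |a| * N u)
    (hN_zero : ∀ u, N u = 0 → u = 0)
    -- f is L-smooth with respect to N
    (L : ℝ) (hL : 0 < L)
    (hsmooth : ∀ u v, dualNorm N (gradient f u - gradient f v) ≤ L * N (u - v))
    (T : ℕ)
    (x : ℕ → EuclideanSpace ℝ (Fin d))
    (α : ℕ → ℝ) (hα : ∀ t ∈ Icc 1 T, 0 < α t)
    (A : ℕ → ℝ) (hA : ∀ t, A t = ∑ s ∈ Icc 1 t, α s)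
    (xtil : ℕ → EuclideanSpace ℝ (Fin d))
    (hxtil : ∀ t ∈ Icc 1 T,
      xtil t = (A t)⁻¹ • (α t • x (t - 1) + ∑ s ∈ Icc 1 (t - 1), α s • x s))
    (ytil : ℕ → EuclideanSpace ℝ (Fin d))
    (hytil : ∀ t ∈ Icc 1 T, ytil t = gradient f (xtil t)) :
    ∀ y, (∑ t ∈ Icc 1 T, α t * (fstar (ytil t) - ⟪x t, ytil t⟫))
        - (∑ t ∈ Icc 1 T, α t * (fstar y - ⟪x t, y⟫))
      ≤ L * ∑ t ∈ Icc 1 T, (α t ^ 2 / A t) * (N (x (t - 1) - x t)) ^ 2 :=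
  optimistic_ftl_fenchel_regret_general f fstar N hconv hdiff hfstar hN_add hN_smul hN_zero L
    hsmooth T x α hα A hA xtil hxtil ytil hytil
end

section
/- Let 𝒦 ⊆ ℝ^d be convex, let φ : ℝ^d → ℝ be differentiable and 1-strongly convex with respect to a norm ‖·‖, with Bregman divergence V_c(x) = φ(x) − ⟨∇φ(c), x − c⟩ − φ(c). Let α_t > 0, let γ_1 ≥ γ_2 ≥ … ≥ γ_T > 0 be non-increasing, let y_1, …, y_T ∈ ℝ^d be arbitrary, and let the Mirror-Descent iterates be x_t = argmin_{x ∈ 𝒦} [γ_t ⟨x, α_t y_t⟩ + V_{x_{t−1}}(x)] from some x_0 ∈ 𝒦. Fix x* ∈ 𝒦 and suppose V_{x_t}(x*) ≤ D for all t = 0, …, T. Then Σ_{t=1}^T α_t ⟨x_t − x*, y_t⟩ ≤ D/γ_T − Σ_{t=1}^T (1/(2γ_t)) ‖x_{t−1} − x_t‖². -/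
/-!
Each Mirror Descent step is a constrained minimiser, so the first-order optimality condition
together with the three-point identity of the Bregman divergence bounds the step's regret by
`(V_{x_{t-1}}(x*) - V_{x_t}(x*) - V_{x_{t-1}}(x_t)) / γ_t`; strong convexity turns the last term
into `‖x_{t-1} - x_t‖² / 2`. Summing, the potential `V_{x_t}(x*)` telescopes, and because the
`γ_t` decrease while `0 ≤ V_{x_t}(x*) ≤ D`, the sum is at most `D / γ_T`.
-/

open scoped RealInnerProductSpace
open Finset

variable {E : Type*} [NormedAddCommGroup E] [InnerProductSpace ℝ E] [CompleteSpace E]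

noncomputable def bregmanDiv (φ : E → ℝ) (c x : E) : ℝ := φ x - ⟪gradient φ c, x - c⟫ - φ c

theorem inner_gradient_sub_gradient_eq_bregmanDiv (φ : E → ℝ) (c z w : E) :
    ⟪gradient φ z - gradient φ c, w - z⟫
      = bregmanDiv φ c w - bregmanDiv φ z w - bregmanDiv φ c z := by
  simp only [bregmanDiv, inner_sub_left, inner_sub_right]
  ring

theorem hasFDerivAt_bregmanDiv {φ : E → ℝ} {z : E} (hφ : DifferentiableAt ℝ φ z) (c : E) :
    HasFDerivAt (bregmanDiv φ c) (fderiv ℝ φ z - innerSL ℝ (gradient φ c) : E →L[ℝ] ℝ) z := by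
  have := (hφ.hasFDerivAt.sub (((innerSL ℝ (gradient φ c)).hasFDerivAt).sub_const
    ⟪gradient φ c, c⟫)).sub_const (φ c)
  refine this.congr_of_eventuallyEq (.of_forall fun u => ?_)
  simp [bregmanDiv, inner_sub_right]

theorem IsMinOn.inner_sub_le_bregmanDiv {K : Set E} (hK : Convex ℝ K) {φ : E → ℝ} {c z w g : E}
    (hmin : IsMinOn (fun u => ⟪g, u⟫ + bregmanDiv φ c u) K z) (hz : z ∈ K) (hw : w ∈ K)
    (hφ : DifferentiableAt ℝ φ z) :
    ⟪g, z - w⟫ ≤ bregmanDiv φ c w - bregmanDiv φ z w - bregmanDiv φ c z := by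
  have hfo := hmin.localize.hasFDerivWithinAt_nonneg
    ((innerSL ℝ g).hasFDerivAt.add (hasFDerivAt_bregmanDiv hφ c)).hasFDerivWithinAt
    (sub_mem_posTangentConeAt_of_segment_subset (hK.segment_subset hz hw))
  rw [← inner_gradient_sub_gradient_eq_bregmanDiv, ← neg_sub w z, inner_neg_right]
  simp only [add_apply, sub_apply, innerSL_apply_apply, ← inner_gradient_left (𝕜 := ℝ)] at hfo
  linarith [inner_sub_left (𝕜 := ℝ) (gradient φ z) (gradient φ c) (w - z)]

theorem IsMinOn.inner_sub_add_le_bregmanDiv_sub_div {K : Set E} (hK : Convex ℝ K) {φ : E → ℝ}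
    {c z w y : E} {γ r : ℝ} (hγ : 0 < γ)
    (hmin : ∀ u ∈ K, γ * ⟪z, y⟫ + bregmanDiv φ c z ≤ γ * ⟪u, y⟫ + bregmanDiv φ c u)
    (hz : z ∈ K) (hw : w ∈ K) (hφ : DifferentiableAt ℝ φ z) (hr : 1 / 2 * r ≤ bregmanDiv φ c z) :
    ⟪z - w, y⟫ + 1 / (2 * γ) * r ≤ (bregmanDiv φ c w - bregmanDiv φ z w) / γ := by
  have hinner : ∀ u, ⟪γ • y, u⟫ = γ * ⟪u, y⟫ := fun u => by
    rw [real_inner_smul_left, real_inner_comm]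
  have h := IsMinOn.inner_sub_le_bregmanDiv hK (g := γ • y)
    (isMinOn_iff.2 fun u hu => by simpa only [hinner] using hmin u hu) hz hw hφ
  rw [hinner] at h
  rw [le_div_iff₀ hγ]
  have hexpand : (⟪z - w, y⟫ + 1 / (2 * γ) * r) * γ = γ * ⟪z - w, y⟫ + 1 / 2 * r := by
    field_simp
  linarith

theorem sum_le_sub_div_of_le_sub_div_of_antitoneOn {T : ℕ} (hT : 1 ≤ T) {a γ v : ℕ → ℝ} {D : ℝ}
    (hγ : ∀ t ∈ Icc 1 T, 0 < γ t) (hγmono : AntitoneOn γ (Set.Icc 1 T))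
    (hv : ∀ t ≤ T, v t ≤ D) (ha : ∀ t ∈ Icc 1 T, a t ≤ (v (t - 1) - v t) / γ t) :
    ∑ t ∈ Icc 1 T, a t ≤ (D - v T) / γ T := by
  induction T, hT using Nat.le_induction with
  | base =>
    simp only [Icc_self, sum_singleton]
    exact (ha 1 (by simp)).trans
      (div_le_div_of_nonneg_right (by linarith [hv 0 (by omega)]) (hγ 1 (by simp)).le)
  | succ n hn ih =>
    have hγle : γ (n + 1) ≤ γ n :=
      hγmono ⟨hn, by omega⟩ ⟨by omega, le_rfl⟩ (Nat.le_succ n)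
    have hsum := ih (fun t ht => hγ t (by simp at ht ⊢; omega))
      (hγmono.mono (Set.Icc_subset_Icc le_rfl (Nat.le_succ n)))
      (fun t ht => hv t (by omega)) (fun t ht => ha t (by simp at ht ⊢; omega))
    have hlast := ha (n + 1) (by simp)
    have hdecay : (D - v n) / γ n ≤ (D - v n) / γ (n + 1) :=
      div_le_div_of_nonneg_left (by linarith [hv n (by omega)]) (hγ _ (by simp)) hγle
    rw [sum_Icc_succ_top (by omega)]
    calc ∑ t ∈ Icc 1 n, a t + a (n + 1)
        ≤ (D - v n) / γ (n + 1) + (v n - v (n + 1)) / γ (n + 1) := by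
          simp only [Nat.add_sub_cancel] at hlast; linarith
      _ = (D - v (n + 1)) / γ (n + 1) := by ring

theorem mirror_descent_weighted_regret_general {d : ℕ}
    (K : Set (EuclideanSpace ℝ (Fin d))) (hK : Convex ℝ K)
    (N : EuclideanSpace ℝ (Fin d) → ℝ)
    -- N is a norm
    (hN_smul : ∀ (a : ℝ) (u : EuclideanSpace ℝ (Fin d)), N (a • u) = |a| * N u)
    -- φ is differentiable with Bregman divergence V, and 1-strongly convex w.r.t. N
    (φ : EuclideanSpace ℝ (Fin d) → ℝ) (hφ : Differentiable ℝ φ)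
    (V : EuclideanSpace ℝ (Fin d) → EuclideanSpace ℝ (Fin d) → ℝ)
    (hV : ∀ c x, V c x = φ x - ⟪gradient φ c, x - c⟫ - φ c)
    (hφsc : ∀ c x, (1 / 2) * (N (x - c)) ^ 2 ≤ V c x)
    (T : ℕ) (hT : 1 ≤ T)
    (α : ℕ → ℝ)
    (γ : ℕ → ℝ) (hγpos : ∀ t ∈ Icc 1 T, 0 < γ t)
    (hγmono : ∀ s ∈ Icc 1 T, ∀ t ∈ Icc 1 T, s ≤ t → γ t ≤ γ s)
    (y : ℕ → EuclideanSpace ℝ (Fin d))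
    -- the Mirror Descent iterates
    (x : ℕ → EuclideanSpace ℝ (Fin d))
    (hx : ∀ t ∈ Icc 1 T, x t ∈ K ∧ ∀ w ∈ K,
      γ t * (α t * ⟪x t, y t⟫) + V (x (t - 1)) (x t)
        ≤ γ t * (α t * ⟪w, y t⟫) + V (x (t - 1)) w)
    (xstar : EuclideanSpace ℝ (Fin d)) (hxstar : xstar ∈ K)
    (D : ℝ) (hD : ∀ t ≤ T, V (x t) xstar ≤ D) :
    ∑ t ∈ Icc 1 T, α t * ⟪x t - xstar, y t⟫
      ≤ D / γ T - ∑ t ∈ Icc 1 T, (1 / (2 * γ t)) * (N (x (t - 1) - x t)) ^ 2 := by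
  obtain rfl : V = bregmanDiv φ := funext fun c => funext (hV c)
  have hN_symm : ∀ u v, N (u - v) = N (v - u) := fun u v => by
    rw [← neg_sub v u, ← neg_one_smul ℝ (v - u), hN_smul]
    simp
  have hstep : ∀ t ∈ Icc 1 T, α t * ⟪x t - xstar, y t⟫ + 1 / (2 * γ t) * N (x (t - 1) - x t) ^ 2
      ≤ (bregmanDiv φ (x (t - 1)) xstar - bregmanDiv φ (x t) xstar) / γ t := fun t ht => by
    obtain ⟨hxt, hmin⟩ := hx t ht
    simpa only [real_inner_smul_right] using
      IsMinOn.inner_sub_add_le_bregmanDiv_sub_div (y := α t • y t) hK (hγpos t ht)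
        (by simpa only [real_inner_smul_right] using hmin) hxt hxstar (hφ _)
        (hN_symm (x t) _ ▸ hφsc _ _)
  have hsum := sum_le_sub_div_of_le_sub_div_of_antitoneOn hT hγpos
    (fun s hs t ht => hγmono s (mem_Icc.2 hs) t (mem_Icc.2 ht)) hD hstep
  rw [sum_add_distrib] at hsum
  have hV_nonneg : 0 ≤ bregmanDiv φ (x T) xstar := le_trans (by positivity) (hφsc (x T) xstar)
  have hγT := hγpos T (mem_Icc.2 ⟨hT, le_rfl⟩)
  have hdrop : (D - bregmanDiv φ (x T) xstar) / γ T ≤ D / γ T := by gcongr; linarith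
  linarith

/-- Lemma 4: weighted regret of Mirror Descent with non-increasing learning
rates `γ_t`, a 1-strongly convex (w.r.t. a norm `N`) distance generating function `φ` with
Bregman divergence `V`, and a uniform bound `V_{x_t}(x*) ≤ D`. -/
theorem mirror_descent_weighted_regret {d : ℕ}
    (K : Set (EuclideanSpace ℝ (Fin d))) (hK : Convex ℝ K)
    (N : EuclideanSpace ℝ (Fin d) → ℝ)
    -- N is a norm
    (hN_add : ∀ u v, N (u + v) ≤ N u + N v)
    (hN_smul : ∀ (a : ℝ) (u : EuclideanSpace ℝ (Fin d)), N (a • u) = |a| * N u)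
    (hN_zero : ∀ u, N u = 0 → u = 0)
    -- φ is differentiable with Bregman divergence V, and 1-strongly convex w.r.t. N
    (φ : EuclideanSpace ℝ (Fin d) → ℝ) (hφ : Differentiable ℝ φ)
    (V : EuclideanSpace ℝ (Fin d) → EuclideanSpace ℝ (Fin d) → ℝ)
    (hV : ∀ c x, V c x = φ x - ⟪gradient φ c, x - c⟫ - φ c)
    (hφsc : ∀ c x, (1 / 2) * (N (x - c)) ^ 2 ≤ V c x)
    (T : ℕ) (hT : 1 ≤ T)
    (α : ℕ → ℝ) (hα : ∀ t ∈ Icc 1 T, 0 < α t)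
    (γ : ℕ → ℝ) (hγpos : ∀ t ∈ Icc 1 T, 0 < γ t)
    (hγmono : ∀ s ∈ Icc 1 T, ∀ t ∈ Icc 1 T, s ≤ t → γ t ≤ γ s)
    (y : ℕ → EuclideanSpace ℝ (Fin d))
    -- the Mirror Descent iterates
    (x : ℕ → EuclideanSpace ℝ (Fin d)) (hx0 : x 0 ∈ K)
    (hx : ∀ t ∈ Icc 1 T, x t ∈ K ∧ ∀ w ∈ K,
      γ t * (α t * ⟪x t, y t⟫) + V (x (t - 1)) (x t)
        ≤ γ t * (α t * ⟪w, y t⟫) + V (x (t - 1)) w)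
    (xstar : EuclideanSpace ℝ (Fin d)) (hxstar : xstar ∈ K)
    (D : ℝ) (hD : ∀ t ≤ T, V (x t) xstar ≤ D) :
    ∑ t ∈ Icc 1 T, α t * ⟪x t - xstar, y t⟫
      ≤ D / γ T - ∑ t ∈ Icc 1 T, (1 / (2 * γ t)) * (N (x (t - 1) - x t)) ^ 2 :=
  mirror_descent_weighted_regret_general K hK N hN_smul φ hφ V hV hφsc T hT α γ hγpos hγmono y x hx
    xstar hxstar D hD
end

section
/- Let f : ℝ^n → ℝ be convex lower semicontinuous and L-smooth with respect to the Euclidean norm, minimized at a point x* of finite norm. Set α_t = t, A_t = t(t+1)/2, and let 1/(C L) ≤ γ_t ≤ 1/(4L) be non-increasing with C > 4. From x_0 ∈ ℝ^n, iterate x_t = x_{t−1} − γ_t α_t ∇f(x̃_t), where x̃_t = (1/A_t)(α_t x_{t−1} + Σ_{s=1}^{t−1} α_s x_s). Suppose (1/2)‖x_t − x*‖² ≤ D for all t = 0, …, T. Then x̄_T = (1/A_T) Σ_{t=1}^T α_t x_t satisfies f(x̄_T) − f(x*) ≤ 2 C L D / T². -/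
/-!
Read the iteration as a Fenchel game: with `x̄_t` the `α`-weighted average of `x_1, …, x_t`,
the quantity `A_t (f(x̄_t) - f(x*))` grows at step `t` by at most the mirror-descent potential
drop `(‖x_{t-1} - x*‖² - ‖x_t - x*‖²) / (2γ_t)`. Convexity at the optimistic point `x̃_t` pays
for the linear terms, and smoothness with `L γ_t α_t² ≤ A_t` (true for `γ_t ≤ 1/(4L)`, `α_t = t`)
pays for the gradient norm. Since `γ_t` is non-increasing and the potentials stay below `2D`,
the sum telescopes to `A_T (f(x̄_T) - f(x*)) ≤ D / γ_T ≤ C L D`, and `A_T ≥ T² / 2`.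
-/

open scoped RealInnerProductSpace Gradient
open Finset

section InnerProductSpace

variable {E : Type*} [NormedAddCommGroup E] [InnerProductSpace ℝ E]

theorem norm_sub_sq_sub_norm_sub_smul_sub_sq (x' g u : E) (η : ℝ) :
    ‖x' - u‖ ^ 2 - ‖x' - η • g - u‖ ^ 2 = 2 * η * ⟪g, x' - u⟫ - η ^ 2 * ‖g‖ ^ 2 := by
  rw [show x' - η • g - u = (x' - u) - η • g by abel, norm_sub_sq_real (x' - u),
    real_inner_smul_right, norm_smul, Real.norm_eq_abs, mul_pow, sq_abs, real_inner_comm]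
  ring

noncomputable def weightedAvg (A : ℕ → ℝ) (x : ℕ → E) (t : ℕ) : E :=
  (A t)⁻¹ • ∑ s ∈ Icc 1 t, (s : ℝ) • x s

theorem smul_weightedAvg {A : ℕ → ℝ} (hA : ∀ t, 0 < t → A t ≠ 0) (x : ℕ → E) (t : ℕ) :
    A t • weightedAvg A x t = ∑ s ∈ Icc 1 t, (s : ℝ) • x s := by
  rcases t.eq_zero_or_pos with rfl | ht
  · simp [weightedAvg]
  · exact smul_inv_smul₀ (hA t ht) _

end InnerProductSpace

section Gradient

variable {E : Type*} [NormedAddCommGroup E] [InnerProductSpace ℝ E] [CompleteSpace E]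
  {f : E → ℝ}

theorem DifferentiableAt.hasDerivAt_add_smul {p v : E} {θ : ℝ}
    (hf : DifferentiableAt ℝ f (p + θ • v)) :
    HasDerivAt (fun θ : ℝ => f (p + θ • v)) ⟪∇ f (p + θ • v), v⟫ θ := by
  have hline : HasDerivAt (fun θ : ℝ => p + θ • v) v θ := by
    simpa using ((hasDerivAt_id θ).smul_const v).const_add p
  rw [inner_gradient_left]
  exact hf.hasFDerivAt.comp_hasDerivAt θ hline

theorem ConvexOn.add_inner_gradient_le (hconv : ConvexOn ℝ Set.univ f) {p : E}
    (hf : DifferentiableAt ℝ f p) (q : E) :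
    f p + ⟪∇ f p, q - p⟫ ≤ f q := by
  have hline : ConvexOn ℝ Set.univ (fun θ : ℝ => f (p + θ • (q - p))) := by
    simpa [Function.comp_def, AffineMap.lineMap_apply, add_comm] using
      hconv.comp_affineMap (AffineMap.lineMap p q)
  have hderiv : HasDerivAt (fun θ : ℝ => f (p + θ • (q - p))) ⟪∇ f p, q - p⟫ 0 := by
    have hf0 : DifferentiableAt ℝ f (p + (0 : ℝ) • (q - p)) := by simpa using hf
    simpa using hf0.hasDerivAt_add_smul
  have := hline.le_slope_of_hasDerivAt (Set.mem_univ 0) (Set.mem_univ 1) one_pos hderiv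
  simp only [slope_def_field, one_smul, zero_smul, add_zero, add_sub_cancel, sub_zero,
    div_one] at this
  linarith

theorem le_add_inner_gradient_add_sq (hf : Differentiable ℝ f) {L : ℝ}
    (hsmooth : ∀ u v, ‖∇ f u - ∇ f v‖ ≤ L * ‖u - v‖) (p q : E) :
    f q ≤ f p + ⟪∇ f p, q - p⟫ + L / 2 * ‖q - p‖ ^ 2 := by
  set v := q - p
  set g : ℝ → ℝ := fun θ => f (p + θ • v) - θ * ⟪∇ f p, v⟫ - L / 2 * θ ^ 2 * ‖v‖ ^ 2
  have hg : ∀ θ, HasDerivAt g (⟪∇ f (p + θ • v) - ∇ f p, v⟫ - L * θ * ‖v‖ ^ 2) θ := by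
    intro θ
    have := (((hf _).hasDerivAt_add_smul (p := p) (v := v) (θ := θ)).sub
      ((hasDerivAt_id θ).mul_const ⟪∇ f p, v⟫)).sub
      (((hasDerivAt_pow 2 θ).const_mul (L / 2)).mul_const (‖v‖ ^ 2))
    exact this.congr_deriv (by rw [inner_sub_left]; ring)
  have hanti : AntitoneOn g (Set.Ici 0) := by
    refine antitoneOn_of_deriv_nonpos (convex_Ici 0) (HasDerivAt.continuousOn fun θ _ => hg θ)
      (fun θ _ => (hg θ).differentiableAt.differentiableWithinAt) fun θ hθ => ?_
    rw [interior_Ici] at hθ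
    rw [(hg θ).deriv, sub_nonpos]
    calc ⟪∇ f (p + θ • v) - ∇ f p, v⟫ ≤ ‖∇ f (p + θ • v) - ∇ f p‖ * ‖v‖ :=
          real_inner_le_norm _ _
      _ ≤ L * ‖θ • v‖ * ‖v‖ := by
          gcongr
          simpa using hsmooth (p + θ • v) p
      _ = L * θ * ‖v‖ ^ 2 := by
          rw [norm_smul, Real.norm_of_nonneg (le_of_lt hθ)]; ring
  have := hanti (Set.mem_Ici.2 le_rfl) (Set.mem_Ici.2 zero_le_one) zero_le_one
  simp only [g, v, zero_smul, one_smul, add_zero, add_sub_cancel] at this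
  linarith

theorem sub_smul_gradient_le (hf : Differentiable ℝ f) {L : ℝ}
    (hsmooth : ∀ u v, ‖∇ f u - ∇ f v‖ ≤ L * ‖u - v‖) (z : E) {c : ℝ} (hc : 0 ≤ c)
    (hLc : L * c ≤ 1) :
    f (z - c • ∇ f z) ≤ f z - c / 2 * ‖∇ f z‖ ^ 2 := by
  have := le_add_inner_gradient_add_sq hf hsmooth z (z - c • ∇ f z)
  simp only [sub_sub_cancel_left, inner_neg_right, real_inner_smul_right,
    real_inner_self_eq_norm_sq, norm_neg, norm_smul, Real.norm_of_nonneg hc] at this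
  nlinarith [mul_le_mul_of_nonneg_right hLc (mul_nonneg hc (sq_nonneg ‖∇ f z‖))]

/-- One round of the game: `x', y', z, x, y` stand for `x_{t-1}, x̄_{t-1}, x̃_t, x_t, x̄_t`,
and `a, A', A` for `α_t, A_{t-1}, A_t`. -/
theorem accelerated_step (hconv : ConvexOn ℝ Set.univ f) (hf : Differentiable ℝ f) {L : ℝ}
    (hsmooth : ∀ u v, ‖∇ f u - ∇ f v‖ ≤ L * ‖u - v‖) {a A' A γ : ℝ} (ha : 0 < a)
    (hA' : 0 ≤ A') (hA : A = A' + a) (hγ : 0 < γ) (hγL : L * γ * a ^ 2 ≤ A)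
    {x' y' z x y : E} (hz : A • z = a • x' + A' • y') (hx : x = x' - (γ * a) • ∇ f z)
    (hy : A • y = a • x + A' • y') (u : E) :
    A * f y ≤ A' * f y' + a * f u + 1 / (2 * γ) * (‖x' - u‖ ^ 2 - ‖x - u‖ ^ 2) := by
  set g := ∇ f z
  have hApos : 0 < A := by linarith
  have hy_step : y = z - (γ * a ^ 2 / A) • g := by
    apply smul_right_injective E hApos.ne'
    dsimp only
    rw [hy, hx, smul_sub A z, hz, smul_smul A, mul_div_cancel₀ _ hApos.ne']
    module
  have hdescent : A * f y ≤ A * f z - γ * a ^ 2 / 2 * ‖g‖ ^ 2 := by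
    have hc : 0 ≤ γ * a ^ 2 / A := by positivity
    have hLc : L * (γ * a ^ 2 / A) ≤ 1 := by
      rw [← mul_div_assoc, div_le_one hApos, ← mul_assoc]; exact hγL
    have := sub_smul_gradient_le hf hsmooth z hc hLc
    rw [← hy_step] at this
    have := mul_le_mul_of_nonneg_left this hApos.le
    field_simp at this ⊢
    linarith
  have hdual : A' * ⟪g, y' - z⟫ + a * ⟪g, u - z⟫ = -(a * ⟪g, x' - u⟫) := by
    have hv : A' • (y' - z) + a • (u - z) = -(a • (x' - u)) := by
      rw [smul_sub, smul_sub, hA] at *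
      linear_combination (norm := module) -hz
    simpa only [inner_add_right, inner_neg_right, real_inner_smul_right] using
      congrArg (⟪g, ·⟫) hv
  have hconvex : A * f z ≤ A' * f y' + a * f u + a * ⟪g, x' - u⟫ := by
    have h1 := mul_le_mul_of_nonneg_left (hconv.add_inner_gradient_le (hf z) y') hA'
    have h2 := mul_le_mul_of_nonneg_left (hconv.add_inner_gradient_le (hf z) u) ha.le
    rw [hA]
    linarith
  have hdist := norm_sub_sq_sub_norm_sub_smul_sub_sq x' g u (γ * a)
  rw [← hx] at hdist
  rw [hdist]
  field_simp
  nlinarith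

theorem weightedAvg_step (hconv : ConvexOn ℝ Set.univ f) (hf : Differentiable ℝ f)
    {L : ℝ} (hL : 0 < L) (hsmooth : ∀ u v, ‖∇ f u - ∇ f v‖ ≤ L * ‖u - v‖)
    {A : ℕ → ℝ} (hA : ∀ t, A t = (t : ℝ) * (t + 1) / 2) {x : ℕ → E} {t : ℕ} (ht : 1 ≤ t)
    {γ : ℝ} (hγ : 0 < γ) (hγL : γ ≤ 1 / (4 * L)) {xtil : E}
    (hxtil : xtil = (A t)⁻¹ • ((t : ℝ) • x (t - 1) + ∑ s ∈ Icc 1 (t - 1), (s : ℝ) • x s))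
    (hx : x t = x (t - 1) - (γ * t) • ∇ f xtil) (u : E) :
    A t * (f (weightedAvg A x t) - f u) ≤ A (t - 1) * (f (weightedAvg A x (t - 1)) - f u)
      + 1 / (2 * γ) * (‖x (t - 1) - u‖ ^ 2 - ‖x t - u‖ ^ 2) := by
  have hAne : ∀ s, 0 < s → A s ≠ 0 := fun s hs => by rw [hA]; positivity
  obtain ⟨k, rfl⟩ : ∃ k, t = k + 1 := ⟨t - 1, by omega⟩
  simp only [Nat.add_sub_cancel] at hxtil hx ⊢
  have hA_succ : A (k + 1) = A k + (k + 1 : ℕ) := by rw [hA, hA]; push_cast; ring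
  have hγL' : L * γ * ((k + 1 : ℕ) : ℝ) ^ 2 ≤ A (k + 1) := by
    have h4 : γ * (4 * L) ≤ 1 := (le_div_iff₀ (by positivity)).1 hγL
    rw [hA]
    push_cast
    nlinarith [mul_le_mul_of_nonneg_right h4 (sq_nonneg ((k : ℝ) + 1)), k.cast_nonneg (α := ℝ)]
  have := accelerated_step hconv hf hsmooth (by positivity) (by rw [hA]; positivity) hA_succ hγ
    hγL' (by rw [hxtil, smul_inv_smul₀ (hAne _ k.succ_pos), smul_weightedAvg hAne]) hx
    (by rw [smul_weightedAvg hAne, smul_weightedAvg hAne, sum_Icc_succ_top (by omega), add_comm])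
    u
  have hA_succ_mul : A (k + 1) * f u = A k * f u + ((k + 1 : ℕ) : ℝ) * f u := by
    rw [hA_succ]; ring
  rw [mul_sub, mul_sub]
  linarith

end Gradient

theorem le_mul_of_le_add_mul_sub {e d w : ℕ → ℝ} {R : ℝ} {T : ℕ} (hT : 1 ≤ T) (he₀ : e 0 ≤ 0)
    (hstep : ∀ t ∈ Icc 1 T, e t ≤ e (t - 1) + w t * (d (t - 1) - d t))
    (hw : ∀ t ∈ Icc 1 T, 0 ≤ w t) (hw_mono : ∀ s ∈ Icc 1 T, ∀ t ∈ Icc 1 T, s ≤ t → w s ≤ w t)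
    (hd : ∀ t ≤ T, 0 ≤ d t ∧ d t ≤ R) :
    e T ≤ w T * R := by
  suffices h : ∀ m, 1 ≤ m → m ≤ T → e m ≤ w m * (R - d m) by
    nlinarith [h T hT le_rfl, hw T (mem_Icc.2 ⟨hT, le_rfl⟩), hd T le_rfl]
  intro m hm
  induction m, hm using Nat.le_induction with
  | base =>
    intro h1T
    have h1 := mem_Icc.2 ⟨le_rfl, h1T⟩
    nlinarith [hstep 1 h1, hw 1 h1, hd 0 (Nat.zero_le T)]
  | succ m hm ih =>
    intro hmT
    have hm' := mem_Icc.2 ⟨hm, (Nat.le_succ m).trans hmT⟩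
    have hm1 : m + 1 ∈ Icc 1 T := mem_Icc.2 ⟨by omega, hmT⟩
    have := hstep (m + 1) hm1
    simp only [Nat.add_sub_cancel] at this
    nlinarith [ih (by omega), hw_mono m hm' (m + 1) hm1 m.le_succ, hd m (by omega)]

theorem accelerated_unconstrained_rate_general {n : ℕ}
    (f : EuclideanSpace ℝ (Fin n) → ℝ)
    (hconv : ConvexOn ℝ Set.univ f)
    -- f is L-smooth with respect to the Euclidean norm
    (L : ℝ) (hL : 0 < L)
    (hdiff : Differentiable ℝ f)
    (hsmooth : ∀ u v, ‖gradient f u - gradient f v‖ ≤ L * ‖u - v‖)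
    (xstar : EuclideanSpace ℝ (Fin n))
    (T : ℕ) (hT : 1 ≤ T)
    (C : ℝ) (hC : 4 < C)
    (γ : ℕ → ℝ)
    (hγ : ∀ t ∈ Icc 1 T, 1 / (C * L) ≤ γ t ∧ γ t ≤ 1 / (4 * L))
    (hγmono : ∀ s ∈ Icc 1 T, ∀ t ∈ Icc 1 T, s ≤ t → γ t ≤ γ s)
    (A : ℕ → ℝ) (hA : ∀ t, A t = (t : ℝ) * (t + 1) / 2)
    -- the iteration
    (x xtil : ℕ → EuclideanSpace ℝ (Fin n))
    (hxtil : ∀ t, 1 ≤ t →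
      xtil t = (A t)⁻¹ • ((t : ℝ) • x (t - 1) + ∑ s ∈ Icc 1 (t - 1), (s : ℝ) • x s))
    (hx : ∀ t ∈ Icc 1 T, x t = x (t - 1) - (γ t * (t : ℝ)) • gradient f (xtil t))
    (D : ℝ) (hD : ∀ t ≤ T, (1 / 2) * ‖x t - xstar‖ ^ 2 ≤ D)
    (xbar : EuclideanSpace ℝ (Fin n))
    (hxbar : xbar = (A T)⁻¹ • ∑ t ∈ Icc 1 T, (t : ℝ) • x t) :
    f xbar - f xstar ≤ 2 * C * L * D / (T : ℝ) ^ 2 := by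
  have hC₀ : 0 < C := by linarith
  have hγpos : ∀ t ∈ Icc 1 T, 0 < γ t := fun t ht => lt_of_lt_of_le (by positivity) (hγ t ht).1
  have hTmem : T ∈ Icc 1 T := mem_Icc.2 ⟨hT, le_rfl⟩
  have hγT : 1 / γ T ≤ C * L := (one_div_le (hγpos T hTmem) (by positivity)).2 (hγ T hTmem).1
  have hD₀ : 0 ≤ D := le_trans (by positivity) (hD 0 T.zero_le)
  have hT₀ : (0 : ℝ) < T := by exact_mod_cast hT
  have hAT : (T : ℝ) ^ 2 / 2 ≤ A T := by rw [hA]; nlinarith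
  have hrate : A T * (f xbar - f xstar) ≤ 1 / (2 * γ T) * (2 * D) := by
    rw [show xbar = weightedAvg A x T from hxbar]
    refine le_mul_of_le_add_mul_sub (e := fun t => A t * (f (weightedAvg A x t) - f xstar))
      (d := fun t => ‖x t - xstar‖ ^ 2) (w := fun t => 1 / (2 * γ t)) hT (by simp [hA])
      (fun t ht => ?_) (fun t ht => by have := hγpos t ht; positivity)
      (fun s hs t ht hst => ?_) (fun t ht => ⟨by positivity, by linarith [hD t ht]⟩)
    · exact weightedAvg_step hconv hdiff hL hsmooth hA (mem_Icc.1 ht).1 (hγpos t ht) (hγ t ht).2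
        (hxtil t (mem_Icc.1 ht).1) (hx t ht) xstar
    · have := hγpos t ht
      gcongr
      exact hγmono s hs t ht hst
  calc f xbar - f xstar ≤ 1 / (2 * γ T) * (2 * D) / A T :=
        (le_div_iff₀' ((by positivity : (0 : ℝ) < T ^ 2 / 2).trans_le hAT)).2 hrate
    _ = D * (1 / γ T) / A T := by ring
    _ ≤ D * (C * L) / ((T : ℝ) ^ 2 / 2) := by gcongr
    _ = 2 * C * L * D / (T : ℝ) ^ 2 := by ring

/-- Theorem 4 / Nesterov 1983 as a game: the unconstrained Euclidean iteration
`x_t = x_{t-1} - γ_t α_t ∇f(x̃_t)` with `α_t = t` and `1/(CL) ≤ γ_t ≤ 1/(4L)` achieves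
`f(x̄_T) - f(x*) ≤ 2CLD/T²`. -/
theorem accelerated_unconstrained_rate {n : ℕ}
    (f : EuclideanSpace ℝ (Fin n) → ℝ)
    (hconv : ConvexOn ℝ Set.univ f)
    (hlsc : LowerSemicontinuous f)
    -- f is L-smooth with respect to the Euclidean norm
    (L : ℝ) (hL : 0 < L)
    (hdiff : Differentiable ℝ f)
    (hsmooth : ∀ u v, ‖gradient f u - gradient f v‖ ≤ L * ‖u - v‖)
    -- x* minimizes f
    (xstar : EuclideanSpace ℝ (Fin n)) (hmin : ∀ w, f xstar ≤ f w)
    (T : ℕ) (hT : 1 ≤ T)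
    (C : ℝ) (hC : 4 < C)
    (γ : ℕ → ℝ)
    (hγ : ∀ t ∈ Icc 1 T, 1 / (C * L) ≤ γ t ∧ γ t ≤ 1 / (4 * L))
    (hγmono : ∀ s ∈ Icc 1 T, ∀ t ∈ Icc 1 T, s ≤ t → γ t ≤ γ s)
    (A : ℕ → ℝ) (hA : ∀ t, A t = (t : ℝ) * (t + 1) / 2)
    -- the iteration
    (x xtil : ℕ → EuclideanSpace ℝ (Fin n))
    (hxtil : ∀ t, 1 ≤ t →
      xtil t = (A t)⁻¹ • ((t : ℝ) • x (t - 1) + ∑ s ∈ Icc 1 (t - 1), (s : ℝ) • x s))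
    (hx : ∀ t ∈ Icc 1 T, x t = x (t - 1) - (γ t * (t : ℝ)) • gradient f (xtil t))
    (D : ℝ) (hD : ∀ t ≤ T, (1 / 2) * ‖x t - xstar‖ ^ 2 ≤ D)
    (xbar : EuclideanSpace ℝ (Fin n))
    (hxbar : xbar = (A T)⁻¹ • ∑ t ∈ Icc 1 T, (t : ℝ) • x t) :
    f xbar - f xstar ≤ 2 * C * L * D / (T : ℝ) ^ 2 :=
  accelerated_unconstrained_rate_general f hconv L hL hdiff hsmooth xstar T hT C hC γ hγ hγmono A hA
    x xtil hxtil hx D hD xbar hxbar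
end

section
/- Let f : ℝ^n → ℝ be differentiable, let α_t = t, A_t = t(t+1)/2, and γ_t = (t+1)/(8Lt). From x_0, define x_t = x_{t−1} − γ_t α_t ∇f(x̃_t), where x̃_t = (1/A_t)(α_t x_{t−1} + Σ_{s=1}^{t−1} α_s x_s), and let x̄_t = (1/A_t) Σ_{s=1}^t α_s x_s, with x̄_0 = x_0. Then for every t ≥ 1 the weighted averages obey the momentum recursion x̄_t = x̄_{t−1} − (1/(4L)) ∇f(x̃_t) + ((t−2)/(t+1)) (x̄_{t−1} − x̄_{t−2}). -/
/-!
Writing `S t = ∑_{s ≤ t} s • x s = (t(t+1)/2) • x̄ t`, the difference `S t - S (t-1)` gives the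
iterate back from two consecutive averages, `x t = ((t+1)/2) • x̄ t - ((t-1)/2) • x̄ (t-1)`.
Substituting this into the gradient step `x t - x (t-1) = -((t+1)/(8L)) • ∇f(x̃ t)` and dividing by
`(t+1)/2` is the momentum recursion.
-/

open Finset

section WeightedAverage

variable {𝕜 E : Type*} [Field 𝕜] [CharZero 𝕜] [AddCommGroup E] [Module 𝕜 E] {x xbar : ℕ → E}

theorem smul_weightedAverage_eq_sum
    (hxbar : ∀ t, 1 ≤ t → xbar t = ((t : 𝕜) * (t + 1) / 2)⁻¹ • ∑ s ∈ Icc 1 t, (s : 𝕜) • x s)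
    (t : ℕ) : ((t : 𝕜) * (t + 1) / 2) • xbar t = ∑ s ∈ Icc 1 t, (s : 𝕜) • x s := by
  rcases Nat.eq_zero_or_pos t with rfl | ht
  · simp
  · have ht0 : (t : 𝕜) ≠ 0 := Nat.cast_ne_zero.mpr ht.ne'
    rw [hxbar t ht, smul_inv_smul₀ (by simp [ht0, Nat.cast_add_one_ne_zero])]

/-- At `t = 0` this reads `x 0 = x̄ 0`, because `0 - 1 = 0` in `ℕ`. -/
theorem iterate_eq_of_weightedAverage (hxbar0 : xbar 0 = x 0)
    (hxbar : ∀ t, 1 ≤ t → xbar t = ((t : 𝕜) * (t + 1) / 2)⁻¹ • ∑ s ∈ Icc 1 t, (s : 𝕜) • x s)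
    (t : ℕ) : x t = (((t : 𝕜) + 1) / 2) • xbar t - (((t : 𝕜) - 1) / 2) • xbar (t - 1) := by
  cases t with
  | zero => rw [← hxbar0]; module
  | succ k =>
    have hS := smul_weightedAverage_eq_sum hxbar (k + 1)
    rw [sum_Icc_succ_top (by omega), ← smul_weightedAverage_eq_sum hxbar k] at hS
    have hk : (k : 𝕜) + 1 ≠ 0 := Nat.cast_add_one_ne_zero k
    simp only [Nat.add_sub_cancel, Nat.cast_succ] at hS ⊢
    linear_combination (norm := skip) (-((k : 𝕜) + 1)⁻¹) • hS
    match_scalars <;> field_simp <;> ring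

theorem weightedAverage_momentum (c : 𝕜) (g : ℕ → E)
    (hiter : ∀ t, x t = (((t : 𝕜) + 1) / 2) • xbar t - (((t : 𝕜) - 1) / 2) • xbar (t - 1))
    (hstep : ∀ t, 1 ≤ t → x t = x (t - 1) - (((t : 𝕜) + 1) * c) • g t) (t : ℕ) (ht : 1 ≤ t) :
    xbar t = xbar (t - 1) - (2 * c) • g t
      + (((t : 𝕜) - 2) / ((t : 𝕜) + 1)) • (xbar (t - 1) - xbar (t - 2)) := by
  obtain ⟨k, rfl⟩ := Nat.exists_eq_add_of_le' ht
  have hcur := hiter (k + 1)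
  have hprev := hiter k
  have hk := hstep (k + 1) ht
  have hk2 : (k : 𝕜) + 1 + 1 ≠ 0 := by exact_mod_cast (k + 1).succ_ne_zero
  simp only [Nat.add_sub_cancel, Nat.cast_succ, show k + 1 - 2 = k - 1 by omega] at hcur hk ⊢
  linear_combination (norm := skip) (2 / ((k : 𝕜) + 1 + 1)) • (hk - hcur + hprev)
  match_scalars <;> field_simp <;> ring

end WeightedAverage

theorem weighted_average_momentum_recursion_general {n : ℕ}
    (f : EuclideanSpace ℝ (Fin n) → ℝ)
    (L : ℝ)
    (A : ℕ → ℝ) (hA : ∀ t, A t = (t : ℝ) * (t + 1) / 2)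
    (γ : ℕ → ℝ) (hγ : ∀ t, 1 ≤ t → γ t = ((t : ℝ) + 1) / (8 * L * t))
    (x xtil xbar : ℕ → EuclideanSpace ℝ (Fin n))
    (hx : ∀ t, 1 ≤ t → x t = x (t - 1) - (γ t * (t : ℝ)) • gradient f (xtil t))
    (hxbar0 : xbar 0 = x 0)
    (hxbar : ∀ t, 1 ≤ t → xbar t = (A t)⁻¹ • ∑ s ∈ Icc 1 t, (s : ℝ) • x s) :
    ∀ t, 1 ≤ t →
      xbar t = xbar (t - 1) - (1 / (4 * L)) • gradient f (xtil t)
        + (((t : ℝ) - 2) / ((t : ℝ) + 1)) • (xbar (t - 1) - xbar (t - 2)) := by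
  intro t ht
  have hiter := iterate_eq_of_weightedAverage hxbar0 (by simpa only [hA] using hxbar)
  have hstep : ∀ s, 1 ≤ s →
      x s = x (s - 1) - (((s : ℝ) + 1) * (8 * L)⁻¹) • gradient f (xtil s) := by
    intro s hs
    have hs0 : (s : ℝ) ≠ 0 := by positivity
    rw [hx s hs, hγ s hs]
    congr 2
    field_simp
  rw [show 1 / (4 * L) = 2 * (8 * L)⁻¹ by ring]
  exact weightedAverage_momentum _ _ hiter hstep t ht

/-- with `α_t = t`, `A_t = t(t+1)/2` and `γ_t = (t+1)/(8Lt)`, the iterates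
`x_t = x_{t-1} - γ_t α_t ∇f(x̃_t)` have weighted averages obeying the momentum recursion
`x̄_t = x̄_{t-1} - (1/(4L)) ∇f(x̃_t) + ((t-2)/(t+1))(x̄_{t-1} - x̄_{t-2})`. -/
theorem weighted_average_momentum_recursion {n : ℕ}
    (f : EuclideanSpace ℝ (Fin n) → ℝ) (hdiff : Differentiable ℝ f)
    (L : ℝ) (hL : 0 < L)
    (A : ℕ → ℝ) (hA : ∀ t, A t = (t : ℝ) * (t + 1) / 2)
    (γ : ℕ → ℝ) (hγ : ∀ t, 1 ≤ t → γ t = ((t : ℝ) + 1) / (8 * L * t))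
    (x xtil xbar : ℕ → EuclideanSpace ℝ (Fin n))
    (hxtil : ∀ t, 1 ≤ t →
      xtil t = (A t)⁻¹ • ((t : ℝ) • x (t - 1) + ∑ s ∈ Icc 1 (t - 1), (s : ℝ) • x s))
    (hx : ∀ t, 1 ≤ t → x t = x (t - 1) - (γ t * (t : ℝ)) • gradient f (xtil t))
    (hxbar0 : xbar 0 = x 0)
    (hxbar : ∀ t, 1 ≤ t → xbar t = (A t)⁻¹ • ∑ s ∈ Icc 1 t, (s : ℝ) • x s) :
    ∀ t, 1 ≤ t →
      xbar t = xbar (t - 1) - (1 / (4 * L)) • gradient f (xtil t)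
        + (((t : ℝ) - 2) / ((t : ℝ) + 1)) • (xbar (t - 1) - xbar (t - 2)) :=
  weighted_average_momentum_recursion_general f L A hA γ hγ x xtil xbar hx hxbar0 hxbar
end

section
/- Let f : ℝ^n → ℝ be differentiable and let L > 0. Consider Nesterov's 1983 iteration: w_0 = z_0, and for t ≥ 1, w_t = z_{t−1} − (1/(4L)) ∇f(z_{t−1}) and z_t = w_t + ((t−1)/(t+2))(w_t − w_{t−1}). Consider also the game iteration with α_t = t, A_t = t(t+1)/2, γ_t = (t+1)/(8Lt): from x_0, x_t = x_{t−1} − γ_t α_t ∇f(x̃_t) where x̃_t = (1/A_t)(α_t x_{t−1} + Σ_{s=1}^{t−1} α_s x_s), and x̄_t = (1/A_t) Σ_{s=1}^t α_s x_s. If the initializations agree, w_0 = z_0 = x_0 = x̄_0 = x̃_1, then for all t = 1, …, T one has w_t = x̄_t and z_{t−1} = x̃_t. -/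
/-!
With weights `α_t = t` and `A_t = t(t+1)/2`, the two averages of the game iteration are linked by
`A_t (x̄_t - x̃_t) = α_t (x_t - x_{t-1})` and, because `α_t x_t = A_t x̄_t - A_{t-1} x̄_{t-1}`, by
`x̃_{t+1} = x̄_t + (t-1)/(t+2) (x̄_t - x̄_{t-1})`. The first identity turns the x-player's step of
length `γ_t α_t = (t+1)/(8L)` into a gradient step of length `1/(4L)` from `x̃_t`, which is
Nesterov's `w`-update; the second is exactly Nesterov's momentum step. Induction on `t` matches
`(w_t, z_t)` with `(x̄_t, x̃_{t+1})`.
-/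

open Finset

section WeightedAverage

variable {E : Type*} [AddCommGroup E] [Module ℝ E]

noncomputable def weightedSum (α : ℕ → ℝ) (x : ℕ → E) (t : ℕ) : E :=
  ∑ s ∈ Icc 1 t, α s • x s

lemma weightedSum_succ (α : ℕ → ℝ) (x : ℕ → E) (t : ℕ) :
    weightedSum α x (t + 1) = weightedSum α x t + α (t + 1) • x (t + 1) :=
  sum_Icc_succ_top (by omega) _

variable {α A : ℕ → ℝ} {x xbar xtil : ℕ → E} {t : ℕ}

lemma smul_weightedAvg_sub_optimisticAvg
    (hbar : A (t + 1) • xbar (t + 1) = weightedSum α x (t + 1))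
    (htil : A (t + 1) • xtil (t + 1) = α (t + 1) • x t + weightedSum α x t) :
    A (t + 1) • (xbar (t + 1) - xtil (t + 1)) = α (t + 1) • (x (t + 1) - x t) := by
  rw [smul_sub, hbar, htil, weightedSum_succ]
  module

lemma smul_optimisticAvg_succ_succ
    (hbar : ∀ s, A s • xbar s = weightedSum α x s)
    (htil : A (t + 2) • xtil (t + 2) = α (t + 2) • x (t + 1) + weightedSum α x (t + 1)) :
    (α (t + 1) * A (t + 2)) • xtil (t + 2) =
      α (t + 2) • (A (t + 1) • xbar (t + 1) - A t • xbar t)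
        + (α (t + 1) * A (t + 1)) • xbar (t + 1) := by
  rw [mul_smul, htil, mul_smul, hbar, hbar, weightedSum_succ]
  module

end WeightedAverage

section LinearWeights

variable {E : Type*} [AddCommGroup E] [Module ℝ E]
  {A : ℕ → ℝ} {x xbar xtil : ℕ → E} {t : ℕ}

lemma weightedAvg_succ_eq_optimisticAvg_sub (hA : ∀ s, A s = (s : ℝ) * (s + 1) / 2)
    (hbar : A (t + 1) • xbar (t + 1) = weightedSum (↑) x (t + 1))
    (htil : A (t + 1) • xtil (t + 1) = ((t + 1 : ℕ) : ℝ) • x t + weightedSum (↑) x t)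
    {c : ℝ} {g : E} (hstep : x (t + 1) = x t - (((t : ℝ) + 2) * c) • g) :
    xbar (t + 1) = xtil (t + 1) - (2 * c) • g := by
  have hA₀ : A (t + 1) ≠ 0 := by rw [hA]; positivity
  have h := (eq_inv_smul_iff₀ hA₀).2 (smul_weightedAvg_sub_optimisticAvg hbar htil)
  rw [hstep, hA] at h
  rw [sub_eq_iff_eq_add'.1 h]
  push_cast
  match_scalars <;> field_simp <;> ring

lemma optimisticAvg_succ_succ_eq (hA : ∀ s, A s = (s : ℝ) * (s + 1) / 2)
    (hbar : ∀ s, A s • xbar s = weightedSum (↑) x s)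
    (htil : A (t + 2) • xtil (t + 2) =
      ((t + 2 : ℕ) : ℝ) • x (t + 1) + weightedSum (↑) x (t + 1)) :
    xtil (t + 2) = xbar (t + 1) + ((t : ℝ) / (t + 3)) • (xbar (t + 1) - xbar t) := by
  have hne : ((t + 1 : ℕ) : ℝ) * A (t + 2) ≠ 0 := by rw [hA]; positivity
  apply smul_right_injective E hne
  dsimp only
  rw [smul_optimisticAvg_succ_succ hbar htil, hA, hA, hA]
  push_cast
  match_scalars <;> field_simp <;> ring

end LinearWeights

theorem nesterov_iterates_eq_game_averages {E : Type*} [AddCommGroup E] [Module ℝ E]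
    (G : E → E) (c : ℝ) (A : ℕ → ℝ) (hA : ∀ s, A s = (s : ℝ) * (s + 1) / 2)
    (w z x xbar xtil : ℕ → E)
    (hw : ∀ t, w (t + 1) = z t - (2 * c) • G (z t))
    (hz : ∀ t, z (t + 1) = w (t + 1) + ((t : ℝ) / (t + 3)) • (w (t + 1) - w t))
    (hx : ∀ t, x (t + 1) = x t - (((t : ℝ) + 2) * c) • G (xtil (t + 1)))
    -- cleared of `(A t)⁻¹` so that it also holds at `t = 0`, where `A 0 = 0` and `xbar 0` is free
    (hbar : ∀ t, A t • xbar t = weightedSum (↑) x t)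
    (htil : ∀ t, A (t + 1) • xtil (t + 1) = ((t + 1 : ℕ) : ℝ) • x t + weightedSum (↑) x t)
    (hw₀ : w 0 = xbar 0) (hz₀ : z 0 = x 0) (t : ℕ) :
    w t = xbar t ∧ z t = xtil (t + 1) := by
  induction t with
  | zero =>
    refine ⟨hw₀, ?_⟩
    have h := htil 0
    norm_num [hA, weightedSum] at h
    rw [hz₀, h]
  | succ t ih =>
    obtain ⟨hwt, hzt⟩ := ih
    have hw' : w (t + 1) = xbar (t + 1) := by
      rw [hw, hzt, weightedAvg_succ_eq_optimisticAvg_sub hA (hbar _) (htil _) (hx t)]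
    refine ⟨hw', ?_⟩
    rw [hz, hw', hwt, optimisticAvg_succ_succ_eq hA hbar (htil _)]

theorem nesterov1983_equals_game_general {n : ℕ}
    (f : EuclideanSpace ℝ (Fin n) → ℝ)
    (L : ℝ) (T : ℕ)
    -- Nesterov's (1983) iteration
    (w z : ℕ → EuclideanSpace ℝ (Fin n))
    (hw : ∀ t, 1 ≤ t → w t = z (t - 1) - (1 / (4 * L)) • gradient f (z (t - 1)))
    (hz : ∀ t, 1 ≤ t → z t = w t + (((t : ℝ) - 1) / ((t : ℝ) + 2)) • (w t - w (t - 1)))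
    -- the game iteration
    (A : ℕ → ℝ) (hA : ∀ t, A t = (t : ℝ) * (t + 1) / 2)
    (γ : ℕ → ℝ) (hγ : ∀ t, 1 ≤ t → γ t = ((t : ℝ) + 1) / (8 * L * t))
    (x xtil xbar : ℕ → EuclideanSpace ℝ (Fin n))
    (hxtil : ∀ t, 1 ≤ t →
      xtil t = (A t)⁻¹ • ((t : ℝ) • x (t - 1) + ∑ s ∈ Icc 1 (t - 1), (s : ℝ) • x s))
    (hx : ∀ t, 1 ≤ t → x t = x (t - 1) - (γ t * (t : ℝ)) • gradient f (xtil t))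
    (hxbar0 : xbar 0 = x 0)
    (hxbar : ∀ t, 1 ≤ t → xbar t = (A t)⁻¹ • ∑ s ∈ Icc 1 t, (s : ℝ) • x s)
    -- matching initializations: w_0 = z_0 = x_0 (= x̄_0 = x̃_1 automatically)
    (hinit_w : w 0 = x 0) (hinit_z : z 0 = x 0) :
    ∀ t, 1 ≤ t → t ≤ T → w t = xbar t ∧ z (t - 1) = xtil t := by
  have hA₀ : ∀ t, 1 ≤ t → A t ≠ 0 := fun t ht => by
    have : (0 : ℝ) < t := by exact_mod_cast ht
    rw [hA]; positivity
  have key := nesterov_iterates_eq_game_averages (gradient f) (1 / (8 * L)) A hA w z x xbar xtil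
    (fun t => by rw [hw (t + 1) (by omega), Nat.add_sub_cancel]; ring_nf)
    (fun t => by
      rw [hz (t + 1) (by omega), Nat.add_sub_cancel]; push_cast; ring_nf)
    (fun t => by
      rw [hx (t + 1) (by omega), Nat.add_sub_cancel, hγ (t + 1) (by omega)]
      push_cast
      field_simp
      ring_nf)
    (fun t => by
      rcases t.eq_zero_or_pos with rfl | ht
      · simp [hA, weightedSum]
      · rw [hxbar t ht, smul_inv_smul₀ (hA₀ t ht)]; rfl)
    (fun t => by
      rw [hxtil (t + 1) (by omega), smul_inv_smul₀ (hA₀ _ (by omega)), Nat.add_sub_cancel]; rfl)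
    (by rw [hinit_w, hxbar0]) hinit_z
  intro t ht _
  obtain ⟨k, rfl⟩ := Nat.exists_eq_add_of_le' ht
  exact ⟨(key (k + 1)).1, (key k).2⟩

/-- Theorem 5: Nesterov's 1983 method with step `θ = 1/(4L)` is equivalent to
the Fenchel-game iteration with `α_t = t`, `γ_t = (t+1)/(8Lt)`: if the initializations agree
then `w_t = x̄_t` and `z_{t-1} = x̃_t` for all `t = 1, …, T`. -/
theorem nesterov1983_equals_game {n : ℕ}
    (f : EuclideanSpace ℝ (Fin n) → ℝ) (hdiff : Differentiable ℝ f)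
    (L : ℝ) (hL : 0 < L) (T : ℕ)
    -- Nesterov's (1983) iteration
    (w z : ℕ → EuclideanSpace ℝ (Fin n))
    (hw : ∀ t, 1 ≤ t → w t = z (t - 1) - (1 / (4 * L)) • gradient f (z (t - 1)))
    (hz : ∀ t, 1 ≤ t → z t = w t + (((t : ℝ) - 1) / ((t : ℝ) + 2)) • (w t - w (t - 1)))
    -- the game iteration
    (A : ℕ → ℝ) (hA : ∀ t, A t = (t : ℝ) * (t + 1) / 2)
    (γ : ℕ → ℝ) (hγ : ∀ t, 1 ≤ t → γ t = ((t : ℝ) + 1) / (8 * L * t))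
    (x xtil xbar : ℕ → EuclideanSpace ℝ (Fin n))
    (hxtil : ∀ t, 1 ≤ t →
      xtil t = (A t)⁻¹ • ((t : ℝ) • x (t - 1) + ∑ s ∈ Icc 1 (t - 1), (s : ℝ) • x s))
    (hx : ∀ t, 1 ≤ t → x t = x (t - 1) - (γ t * (t : ℝ)) • gradient f (xtil t))
    (hxbar0 : xbar 0 = x 0)
    (hxbar : ∀ t, 1 ≤ t → xbar t = (A t)⁻¹ • ∑ s ∈ Icc 1 t, (s : ℝ) • x s)
    -- matching initializations: w_0 = z_0 = x_0 (= x̄_0 = x̃_1 automatically)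
    (hinit_w : w 0 = x 0) (hinit_z : z 0 = x 0) :
    ∀ t, 1 ≤ t → t ≤ T → w t = xbar t ∧ z (t - 1) = xtil t :=
  nesterov1983_equals_game_general f L T w z hw hz A hA γ hγ x xtil xbar hxtil hx hxbar0 hxbar
    hinit_w hinit_z
end

section
/- Let 𝒦 ⊆ ℝ^d be convex, let R : 𝒦 → ℝ be β-strongly convex with respect to a norm ‖·‖, let η > 0, and let θ_1, …, θ_T ∈ ℝ^d be arbitrary loss vectors with cumulative sums L_t = Σ_{s=1}^t θ_s. Let the Be-The-Regularized-Leader iterates be x_t = argmin_{x ∈ 𝒦} [⟨x, L_t⟩ + (1/η) R(x)] for t ≥ 1, and set x_0 = z = argmin_{x ∈ 𝒦} R(x). Then for every x* ∈ 𝒦, Σ_{t=1}^T ⟨x_t − x*, θ_t⟩ ≤ ( R(x*) − R(z) − (β/2) Σ_{t=1}^T ‖x_t − x_{t−1}‖² ) / η. -/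
/-!
Strong convexity makes each objective `Φ_t = ⟪·, L_t⟫ + R/η` grow quadratically away from its
minimizer `x_t` over `K`. Comparing the `t`-th objective at `x_t` and `x_{t+1}` gives
`Φ_t(x_t) + ⟪x_{t+1}, θ_{t+1}⟫ + β/(2η) N(x_{t+1} - x_t)² ≤ Φ_{t+1}(x_{t+1})`, since
`Φ_{t+1} = Φ_t + ⟪·, θ_{t+1}⟫`. Summing telescopes from `Φ_0(x_0) = R(z)/η` to
`Φ_T(x_T) ≤ Φ_T(x*)`.
-/

open scoped RealInnerProductSpace
open Finset Filter Topology

section Module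

variable {E : Type*} [AddCommGroup E] [Module ℝ E]

def StrongConvexOnWrt (K : Set E) (N : E → ℝ) (β : ℝ) (f : E → ℝ) : Prop :=
  ∀ u ∈ K, ∀ v ∈ K, ∀ a : ℝ, 0 ≤ a → a ≤ 1 →
    f (a • u + (1 - a) • v) ≤ a * f u + (1 - a) * f v - β / 2 * a * (1 - a) * (N (u - v)) ^ 2

namespace StrongConvexOnWrt

variable {K : Set E} {N : E → ℝ} {β : ℝ} {f : E → ℝ}

theorem const_mul (hf : StrongConvexOnWrt K N β f) {c : ℝ} (hc : 0 ≤ c) :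
    StrongConvexOnWrt K N (c * β) (fun w => c * f w) := by
  intro u hu v hv a ha0 ha1
  have := mul_le_mul_of_nonneg_left (hf u hu v hv a ha0 ha1) hc
  linarith

theorem add_sq_le_of_isMinOn (hK : Convex ℝ K) (hf : StrongConvexOnWrt K N β f)
    {y : E} (hy : y ∈ K) (hmin : IsMinOn f K y) {w : E} (hw : w ∈ K) :
    f y + β / 2 * N (w - y) ^ 2 ≤ f w := by
  set C := β / 2 * N (w - y) ^ 2
  -- Compare `y` with the point `a • w + (1 - a) • y` of the segment, then let `a → 0⁺`.
  have hsegment : ∀ a ∈ Set.Ioc (0 : ℝ) 1, f y + (1 - a) * C ≤ f w := by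
    rintro a ⟨ha0, ha1⟩
    have hmem : a • w + (1 - a) • y ∈ K := hK hw hy ha0.le (by linarith) (by ring)
    have hconv := hf w hw y hy a ha0.le ha1
    have hmin' : f y ≤ f (a • w + (1 - a) • y) := hmin hmem
    have : a * (f y + (1 - a) * C) ≤ a * f w := by linear_combination hmin' + hconv
    exact le_of_mul_le_mul_left this ha0
  have hlim : Tendsto (fun a : ℝ => f y + (1 - a) * C) (𝓝[>] 0) (𝓝 (f y + C)) := by
    have : Continuous fun a : ℝ => f y + (1 - a) * C := by fun_prop
    simpa using (this.tendsto 0).mono_left nhdsWithin_le_nhds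
  exact le_of_tendsto hlim (eventually_of_mem (Ioc_mem_nhdsGT one_pos) hsegment)

end StrongConvexOnWrt

end Module

theorem StrongConvexOnWrt.inner_add {E : Type*} [NormedAddCommGroup E] [InnerProductSpace ℝ E]
    {K : Set E} {N : E → ℝ} {β : ℝ} {f : E → ℝ} (hf : StrongConvexOnWrt K N β f) (L : E) :
    StrongConvexOnWrt K N β (fun w => ⟪w, L⟫ + f w) := by
  intro u hu v hv a ha0 ha1
  have := hf u hu v hv a ha0 ha1
  simp only [inner_add_left, real_inner_smul_left]
  linarith

theorem add_sum_Icc_le_of_add_le {a b : ℕ → ℝ} {T : ℕ}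
    (h : ∀ t < T, a t + b (t + 1) ≤ a (t + 1)) :
    a 0 + ∑ t ∈ Icc 1 T, b t ≤ a T := by
  induction T with
  | zero => simp
  | succ T ih =>
    rw [sum_Icc_succ_top (by omega), ← add_assoc]
    linarith [ih fun t ht => h t (by omega), h T (by omega)]

theorem btrl_regret_general {d : ℕ}
    (K : Set (EuclideanSpace ℝ (Fin d))) (hK : Convex ℝ K)
    (N : EuclideanSpace ℝ (Fin d) → ℝ)
    -- R is β-strongly convex with respect to N on K
    (R : EuclideanSpace ℝ (Fin d) → ℝ) (β : ℝ)
    (hR : ∀ u ∈ K, ∀ v ∈ K, ∀ a : ℝ, 0 ≤ a → a ≤ 1 →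
      R (a • u + (1 - a) • v)
        ≤ a * R u + (1 - a) * R v - β / 2 * a * (1 - a) * (N (u - v)) ^ 2)
    (η : ℝ) (hη : 0 < η)
    (T : ℕ)
    (θ : ℕ → EuclideanSpace ℝ (Fin d))
    (Lvec : ℕ → EuclideanSpace ℝ (Fin d)) (hLvec : ∀ t, Lvec t = ∑ s ∈ Icc 1 t, θ s)
    -- z minimizes R over K, and x_0 = z
    (z : EuclideanSpace ℝ (Fin d)) (hzK : z ∈ K) (hz : ∀ w ∈ K, R z ≤ R w)
    (x : ℕ → EuclideanSpace ℝ (Fin d)) (hx0 : x 0 = z)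
    -- the Be-The-Regularized-Leader iterates
    (hx : ∀ t, 1 ≤ t → t ≤ T → x t ∈ K ∧ ∀ w ∈ K,
      ⟪x t, Lvec t⟫ + (1 / η) * R (x t) ≤ ⟪w, Lvec t⟫ + (1 / η) * R w) :
    ∀ xstar ∈ K,
      ∑ t ∈ Icc 1 T, ⟪x t - xstar, θ t⟫
        ≤ (R xstar - R z - β / 2 * ∑ t ∈ Icc 1 T, (N (x t - x (t - 1))) ^ 2) / η := by
  intro xstar hxstar
  set Φ : ℕ → EuclideanSpace ℝ (Fin d) → ℝ := fun t w => ⟪w, Lvec t⟫ + (1 / η) * R w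
  have hΦ_succ : ∀ t w, Φ (t + 1) w = Φ t w + ⟪w, θ (t + 1)⟫ := fun t w => by
    simp only [Φ, hLvec, sum_Icc_succ_top (Nat.le_add_left 1 t), inner_add_right]
    ring
  have hconv : ∀ t, StrongConvexOnWrt K N (1 / η * β) (Φ t) := fun t =>
    (StrongConvexOnWrt.const_mul hR (by positivity)).inner_add (Lvec t)
  have hmin : ∀ t ≤ T, x t ∈ K ∧ IsMinOn (Φ t) K (x t) := by
    rintro (_ | t) ht
    · refine ⟨hx0 ▸ hzK, fun w hw => ?_⟩
      have := mul_le_mul_of_nonneg_left (hz w hw) (one_div_nonneg.mpr hη.le)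
      simpa [Φ, hLvec, hx0] using this
    · exact hx (t + 1) (by omega) ht
  have htel := add_sum_Icc_le_of_add_le (a := fun t => Φ t (x t))
    (b := fun t => ⟪x t, θ t⟫ + 1 / η * β / 2 * N (x t - x (t - 1)) ^ 2) (T := T)
    fun t ht => by
      have := (hconv t).add_sq_le_of_isMinOn hK (hmin t ht.le).1 (hmin t ht.le).2
        (hmin (t + 1) ht).1
      simp only [Nat.add_sub_cancel, hΦ_succ]
      linarith
  have hopt : Φ T (x T) ≤ Φ T xstar := (hmin T le_rfl).2 hxstar
  simp only [Φ, hx0, hLvec, inner_sum, sum_add_distrib, ← mul_sum, Icc_eq_empty_of_lt one_pos,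
    sum_empty] at htel hopt
  rw [div_eq_mul_one_div, sub_mul, sub_mul]
  simp only [inner_sub_left, sum_sub_distrib]
  linarith

/-- regret bound for Be-The-Regularized-Leader with a `β`-strongly convex
regularizer `R` (w.r.t. a norm `N`): for every `x* ∈ 𝒦`,
`Σ_t ⟪x_t - x*, θ_t⟫ ≤ (R(x*) - R(z) - (β/2) Σ_t N(x_t - x_{t-1})²)/η`. -/
theorem btrl_regret {d : ℕ}
    (K : Set (EuclideanSpace ℝ (Fin d))) (hK : Convex ℝ K)
    (N : EuclideanSpace ℝ (Fin d) → ℝ)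
    -- N is a norm
    (hN_add : ∀ u v, N (u + v) ≤ N u + N v)
    (hN_smul : ∀ (a : ℝ) (u : EuclideanSpace ℝ (Fin d)), N (a • u) = |a| * N u)
    (hN_zero : ∀ u, N u = 0 → u = 0)
    -- R is β-strongly convex with respect to N on K
    (R : EuclideanSpace ℝ (Fin d) → ℝ) (β : ℝ) (hβ : 0 < β)
    (hR : ∀ u ∈ K, ∀ v ∈ K, ∀ a : ℝ, 0 ≤ a → a ≤ 1 →
      R (a • u + (1 - a) • v)
        ≤ a * R u + (1 - a) * R v - β / 2 * a * (1 - a) * (N (u - v)) ^ 2)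
    (η : ℝ) (hη : 0 < η)
    (T : ℕ)
    (θ : ℕ → EuclideanSpace ℝ (Fin d))
    (Lvec : ℕ → EuclideanSpace ℝ (Fin d)) (hLvec : ∀ t, Lvec t = ∑ s ∈ Icc 1 t, θ s)
    -- z minimizes R over K, and x_0 = z
    (z : EuclideanSpace ℝ (Fin d)) (hzK : z ∈ K) (hz : ∀ w ∈ K, R z ≤ R w)
    (x : ℕ → EuclideanSpace ℝ (Fin d)) (hx0 : x 0 = z)
    -- the Be-The-Regularized-Leader iterates
    (hx : ∀ t, 1 ≤ t → t ≤ T → x t ∈ K ∧ ∀ w ∈ K,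
      ⟪x t, Lvec t⟫ + (1 / η) * R (x t) ≤ ⟪w, Lvec t⟫ + (1 / η) * R w) :
    ∀ xstar ∈ K,
      ∑ t ∈ Icc 1 T, ⟪x t - xstar, θ t⟫
        ≤ (R xstar - R z - β / 2 * ∑ t ∈ Icc 1 T, (N (x t - x (t - 1))) ^ 2) / η :=
  btrl_regret_general K hK N R β hR η hη T θ Lvec hLvec z hzK hz x hx0 hx
end

section
/- Let 𝒳 ⊆ ℝ^d be compact convex, let φ : ℝ^d → ℝ be 1-strongly convex with respect to a norm ‖·‖ and L_0-Lipschitz on 𝒳, let μ > 0, and let y_1, …, y_T ∈ ℝ^d be arbitrary. Define the losses ℓ_0(x) = μ φ(x) and ℓ_t(x) = μ φ(x) + ⟨x, y_t⟩ for t ≥ 1, fix positive weights α_0, α_1, …, α_T with Ã_t = Σ_{s=0}^t α_s, and let the Be-The-Leader iterates be x_t = argmin_{x ∈ 𝒳} Σ_{s=0}^t α_s ℓ_s(x) for t ≥ 0 (so x_0 = argmin_{x ∈ 𝒳} φ(x)). Then for every x* ∈ 𝒳, Σ_{t=1}^T α_t ( ℓ_t(x_t) − ℓ_t(x*) ) ≤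 α_0 μ L_0 ‖x* − x_0‖ − Σ_{t=1}^T (μ Ã_{t−1}/2) ‖x_{t−1} − x_t‖². -/
/-!
Every cumulative objective `F t = ∑_{s ≤ t} α s * ℓ s` is `μ * Atil t`-strongly convex with
respect to `N`, so its minimizer `x t` over the convex set `X` beats `x (t + 1)` on `F t` by the
margin `μ * Atil t / 2 * N (x t - x (t + 1)) ^ 2`. Telescoping these inequalities (be the leader)
bounds the regret against `xstar` by `α 0 * (ℓ 0 xstar - ℓ 0 (x 0))` minus the sum of the margins,
and the Lipschitz bound on `φ` controls the first term.
-/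

open scoped RealInnerProductSpace
open Finset Filter Topology

section StrongConvexity

variable {E : Type*} [AddCommGroup E] [Module ℝ E]

/-- Unlike Mathlib's `StrongConvexOn`, distances are measured by an arbitrary function `N`
rather than by the norm of the space. -/
def StrongConvexWrt (N : E → ℝ) (κ : ℝ) (f : E → ℝ) : Prop :=
  ∀ u v : E, ∀ θ : ℝ, 0 ≤ θ → θ ≤ 1 →
    f ((1 - θ) • u + θ • v) + κ / 2 * θ * (1 - θ) * N (u - v) ^ 2 ≤ (1 - θ) * f u + θ * f v

namespace StrongConvexWrt

variable {N : E → ℝ}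

theorem add {κ κ' : ℝ} {f g : E → ℝ} (hf : StrongConvexWrt N κ f)
    (hg : StrongConvexWrt N κ' g) : StrongConvexWrt N (κ + κ') (fun w => f w + g w) := by
  intro u v θ h0 h1
  linarith [hf u v θ h0 h1, hg u v θ h0 h1]

theorem const_mul {κ c : ℝ} {f : E → ℝ} (hf : StrongConvexWrt N κ f) (hc : 0 ≤ c) :
    StrongConvexWrt N (c * κ) (fun w => c * f w) := by
  intro u v θ h0 h1
  nlinarith [mul_le_mul_of_nonneg_left (hf u v θ h0 h1) hc]

theorem sum {ι : Type*} (s : Finset ι) {κ : ι → ℝ} {f : ι → E → ℝ}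
    (hf : ∀ i ∈ s, StrongConvexWrt N (κ i) (f i)) :
    StrongConvexWrt N (∑ i ∈ s, κ i) (fun w => ∑ i ∈ s, f i w) := by
  classical
  induction s using Finset.induction_on with
  | empty => intro u v θ _ _; simp
  | insert i s hi ih =>
    simp only [sum_insert hi]
    exact (hf i (mem_insert_self i s)).add (ih fun j hj => hf j (mem_insert_of_mem hj))

theorem add_sq_le_of_isMinOn {κ : ℝ} {f : E → ℝ} (hf : StrongConvexWrt N κ f) {s : Set E}
    (hs : Convex ℝ s) {x v : E} (hx : x ∈ s) (hmin : IsMinOn f s x) (hv : v ∈ s) :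
    f x + κ / 2 * N (x - v) ^ 2 ≤ f v := by
  -- compare `x` with the points `(1 - θ) • x + θ • v` of `s`, divide by `θ`, and let `θ → 0`
  have hθ : ∀ θ ∈ Set.Ioo (0 : ℝ) 1, f x + κ / 2 * (1 - θ) * N (x - v) ^ 2 ≤ f v := by
    rintro θ ⟨h0, h1⟩
    have hseg := hf x v θ h0.le h1.le
    have hle := isMinOn_iff.1 hmin _ (hs hx hv (sub_nonneg.2 h1.le) h0.le (sub_add_cancel 1 θ))
    have : θ * (f x + κ / 2 * (1 - θ) * N (x - v) ^ 2) ≤ θ * f v := by nlinarith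
    exact le_of_mul_le_mul_left this h0
  refine le_of_tendsto (x := 𝓝[>] 0) ?_ (eventually_of_mem (Ioo_mem_nhdsGT one_pos) hθ)
  have hcont : Continuous fun θ : ℝ => f x + κ / 2 * (1 - θ) * N (x - v) ^ 2 := by fun_prop
  simpa using hcont.continuousWithinAt.tendsto (x := (0 : ℝ)) (s := Set.Ioi 0)

end StrongConvexWrt

end StrongConvexity

section InnerProductSpace

variable {F : Type*} [NormedAddCommGroup F] [InnerProductSpace ℝ F] {N : F → ℝ}

theorem StrongConvexWrt.add_inner {κ : ℝ} {f : F → ℝ} (hf : StrongConvexWrt N κ f) (y : F) :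
    StrongConvexWrt N κ (fun w => f w + ⟪w, y⟫) := by
  intro u v θ h0 h1
  have := hf u v θ h0 h1
  dsimp only
  rw [inner_add_left, real_inner_smul_left, real_inner_smul_left]
  linarith

theorem strongConvexWrt_of_le_add_inner (hN : ∀ (a : ℝ) (u : F), N (a • u) = |a| * N u)
    {κ : ℝ} {f : F → ℝ} (g : F → F)
    (hfg : ∀ u v, f u + ⟪g u, v - u⟫ + κ / 2 * N (v - u) ^ 2 ≤ f v) :
    StrongConvexWrt N κ f := by
  intro u v θ h0 h1
  set m := (1 - θ) • u + θ • v
  have hu := hfg m u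
  have hv := hfg m v
  have eu : u - m = θ • (u - v) := by module
  have ev : v - m = (-(1 - θ)) • (u - v) := by module
  rw [eu, hN, abs_of_nonneg h0, inner_smul_right] at hu
  rw [ev, hN, abs_neg, abs_of_nonneg (by linarith), inner_smul_right] at hv
  nlinarith [mul_le_mul_of_nonneg_left hu (by linarith : (0 : ℝ) ≤ 1 - θ),
    mul_le_mul_of_nonneg_left hv h0]

end InnerProductSpace

theorem sum_range_succ_eq_add_sum_Icc {M : Type*} [AddCommMonoid M] (f : ℕ → M) (n : ℕ) :
    ∑ s ∈ range (n + 1), f s = f 0 + ∑ s ∈ Icc 1 n, f s := by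
  rw [range_eq_Ico, sum_eq_sum_Ico_succ_bot n.succ_pos]
  rfl

/-- The be-the-leader lemma, sharpened by the margins `r` by which each leader wins. -/
theorem sum_Icc_sub_le_of_leader {α : Type*} (g : ℕ → α → ℝ) (x : ℕ → α) (r : ℕ → ℝ) {T : ℕ}
    (hgain : ∀ t < T,
      ∑ s ∈ range (t + 1), g s (x t) + r (t + 1) ≤ ∑ s ∈ range (t + 1), g s (x (t + 1)))
    {w : α} (hw : ∑ s ∈ range (T + 1), g s (x T) ≤ ∑ s ∈ range (T + 1), g s w) :
    ∑ t ∈ Icc 1 T, (g t (x t) - g t w) ≤ g 0 w - g 0 (x 0) - ∑ t ∈ Icc 1 T, r t := by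
  have htel : ∀ t ≤ T, ∑ s ∈ Icc 1 t, g s (x s) + ∑ s ∈ Icc 1 t, r s
      ≤ ∑ s ∈ range (t + 1), g s (x t) - g 0 (x 0) := by
    intro t
    induction t with
    | zero => intro _; simp
    | succ t ih =>
      intro ht
      rw [sum_Icc_succ_top (by omega), sum_Icc_succ_top (by omega), sum_range_succ]
      linarith [ih (by omega), hgain t ht]
  rw [sum_range_succ_eq_add_sum_Icc, sum_range_succ_eq_add_sum_Icc (fun s => g s w)] at hw
  rw [sum_sub_distrib]
  linarith [htel T le_rfl, sum_range_succ_eq_add_sum_Icc (fun s => g s (x T)) T]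

theorem btl_strongly_convex_regret_general {d : ℕ}
    (X : Set (EuclideanSpace ℝ (Fin d)))
    (hXconv : Convex ℝ X)
    (N : EuclideanSpace ℝ (Fin d) → ℝ)
    -- N is a norm
    (hN_smul : ∀ (a : ℝ) (u : EuclideanSpace ℝ (Fin d)), N (a • u) = |a| * N u)
    -- φ is differentiable, 1-strongly convex w.r.t. N, and L₀-Lipschitz on X
    (φ : EuclideanSpace ℝ (Fin d) → ℝ)
    (hφsc : ∀ u v, φ u + ⟪gradient φ u, v - u⟫ + 1 / 2 * (N (v - u)) ^ 2 ≤ φ v)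
    (L0 : ℝ) (hL0 : ∀ u ∈ X, ∀ v ∈ X, |φ u - φ v| ≤ L0 * N (u - v))
    (μ : ℝ) (hμ : 0 < μ)
    (T : ℕ)
    (y : ℕ → EuclideanSpace ℝ (Fin d))
    -- the losses ℓ_0(x) = μφ(x), ℓ_t(x) = μφ(x) + ⟪x, y_t⟫
    (ℓ : ℕ → EuclideanSpace ℝ (Fin d) → ℝ)
    (hℓ0 : ∀ w, ℓ 0 w = μ * φ w)
    (hℓ : ∀ t, 1 ≤ t → ∀ w, ℓ t w = μ * φ w + ⟪w, y t⟫)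
    -- positive weights
    (α : ℕ → ℝ) (hα : ∀ t ≤ T, 0 < α t)
    (Atil : ℕ → ℝ) (hAtil : ∀ t, Atil t = ∑ s ∈ range (t + 1), α s)
    -- the Be-The-Leader iterates: x_t minimizes Σ_{s=0}^t α_s ℓ_s over X
    (x : ℕ → EuclideanSpace ℝ (Fin d))
    (hx : ∀ t ≤ T, x t ∈ X ∧ ∀ w ∈ X,
      ∑ s ∈ range (t + 1), α s * ℓ s (x t) ≤ ∑ s ∈ range (t + 1), α s * ℓ s w) :
    ∀ xstar ∈ X,
      ∑ t ∈ Icc 1 T, α t * (ℓ t (x t) - ℓ t xstar)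
        ≤ α 0 * μ * L0 * N (xstar - x 0)
          - ∑ t ∈ Icc 1 T, (μ * Atil (t - 1) / 2) * (N (x (t - 1) - x t)) ^ 2 := by
  intro xstar hxstar
  have hφ : StrongConvexWrt N 1 φ := strongConvexWrt_of_le_add_inner hN_smul (gradient φ) hφsc
  have hℓsc : ∀ s, StrongConvexWrt N μ (ℓ s) := by
    rintro (_ | s)
    · simpa [funext hℓ0] using hφ.const_mul hμ.le
    · simpa [funext (hℓ (s + 1) s.succ_pos)] using (hφ.const_mul hμ.le).add_inner (y (s + 1))
  have hFsc : ∀ t ≤ T,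
      StrongConvexWrt N (μ * Atil t) (fun w => ∑ s ∈ range (t + 1), α s * ℓ s w) := by
    intro t ht
    have := StrongConvexWrt.sum (range (t + 1))
      fun s hs => (hℓsc s).const_mul (hα s ((mem_range_succ_iff.1 hs).trans ht)).le
    rwa [← sum_mul, ← hAtil, mul_comm] at this
  have hregret := sum_Icc_sub_le_of_leader (fun s w => α s * ℓ s w) x
    (fun t => μ * Atil (t - 1) / 2 * N (x (t - 1) - x t) ^ 2)
    (fun t ht => (hFsc t ht.le).add_sq_le_of_isMinOn hXconv (hx t ht.le).1
      (isMinOn_iff.2 (hx t ht.le).2) (hx (t + 1) ht).1)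
    ((hx T le_rfl).2 xstar hxstar)
  have hlip : φ xstar - φ (x 0) ≤ L0 * N (xstar - x 0) :=
    (abs_le.1 (hL0 xstar hxstar (x 0) (hx 0 T.zero_le).1)).2
  simp only [mul_sub, hℓ0] at hregret ⊢
  linarith [mul_le_mul_of_nonneg_left hlip (mul_nonneg (hα 0 T.zero_le).le hμ.le)]

/-- regret bound for Be-The-Leader on the strongly convex losses
`ℓ_0 = μφ`, `ℓ_t(x) = μφ(x) + ⟪x, y_t⟫`: for every `x* ∈ 𝒳`,
`Σ_{t=1}^T α_t (ℓ_t(x_t) - ℓ_t(x*)) ≤ α_0 μ L_0 ‖x* - x_0‖ - Σ_t (μ Ã_{t-1}/2) ‖x_{t-1} - x_t‖²`. -/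
theorem btl_strongly_convex_regret {d : ℕ}
    (X : Set (EuclideanSpace ℝ (Fin d)))
    (hXcomp : IsCompact X) (hXconv : Convex ℝ X)
    (N : EuclideanSpace ℝ (Fin d) → ℝ)
    -- N is a norm
    (hN_add : ∀ u v, N (u + v) ≤ N u + N v)
    (hN_smul : ∀ (a : ℝ) (u : EuclideanSpace ℝ (Fin d)), N (a • u) = |a| * N u)
    (hN_zero : ∀ u, N u = 0 → u = 0)
    -- φ is differentiable, 1-strongly convex w.r.t. N, and L₀-Lipschitz on X
    (φ : EuclideanSpace ℝ (Fin d) → ℝ) (hφdiff : Differentiable ℝ φ)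
    (hφsc : ∀ u v, φ u + ⟪gradient φ u, v - u⟫ + 1 / 2 * (N (v - u)) ^ 2 ≤ φ v)
    (L0 : ℝ) (hL0 : ∀ u ∈ X, ∀ v ∈ X, |φ u - φ v| ≤ L0 * N (u - v))
    (μ : ℝ) (hμ : 0 < μ)
    (T : ℕ)
    (y : ℕ → EuclideanSpace ℝ (Fin d))
    -- the losses ℓ_0(x) = μφ(x), ℓ_t(x) = μφ(x) + ⟪x, y_t⟫
    (ℓ : ℕ → EuclideanSpace ℝ (Fin d) → ℝ)
    (hℓ0 : ∀ w, ℓ 0 w = μ * φ w)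
    (hℓ : ∀ t, 1 ≤ t → ∀ w, ℓ t w = μ * φ w + ⟪w, y t⟫)
    -- positive weights
    (α : ℕ → ℝ) (hα : ∀ t ≤ T, 0 < α t)
    (Atil : ℕ → ℝ) (hAtil : ∀ t, Atil t = ∑ s ∈ range (t + 1), α s)
    -- the Be-The-Leader iterates: x_t minimizes Σ_{s=0}^t α_s ℓ_s over X
    (x : ℕ → EuclideanSpace ℝ (Fin d))
    (hx : ∀ t ≤ T, x t ∈ X ∧ ∀ w ∈ X,
      ∑ s ∈ range (t + 1), α s * ℓ s (x t) ≤ ∑ s ∈ range (t + 1), α s * ℓ s w) :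
    ∀ xstar ∈ X,
      ∑ t ∈ Icc 1 T, α t * (ℓ t (x t) - ℓ t xstar)
        ≤ α 0 * μ * L0 * N (xstar - x 0)
          - ∑ t ∈ Icc 1 T, (μ * Atil (t - 1) / 2) * (N (x (t - 1) - x t)) ^ 2 :=
  btl_strongly_convex_regret_general X hXconv N hN_smul φ hφsc L0 hL0 μ hμ T y ℓ hℓ0 hℓ α hα Atil
    hAtil x hx
end
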